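/- arXiv:2501.10918 — 4 statements merged into one kernel-verified Lean document; each statement's English description precedes it below -/
import Mathlib

section
/- Every finite chordal graph with at least one vertex has a simplicial vertex, i.e., a vertex whose neighborhood induces a clique. -/
/-- A graph is chordal if every cycle of length at least 4 has a chord. -/
def IsChordal {V : Type*} (G : SimpleGraph V) : Prop :=
  ∀ n : ℕ, 4 ≤ n → ∀ f : ZMod n → V, Function.Injective f →
    (∀ i, G.Adj (f i) (f (i + 1))) →
    ∃ i j : ZMod n, j ≠ i ∧ j ≠ i + 1 ∧ j ≠ i - 1 ∧ G.Adj (f i) (f j)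

open SimpleGraph

namespace ChordalAux

universe u
variable {V : Type u}

def Restrict (G : SimpleGraph V) (T : Set V) : SimpleGraph V where
  Adj u v := G.Adj u v ∧ u ∈ T ∧ v ∈ T
  symm := ⟨fun _ _ ⟨h, hu, hv⟩ => ⟨h.symm, hv, hu⟩⟩
  loopless := ⟨fun u ⟨h, _, _⟩ => G.loopless.irrefl u h⟩

lemma walk_mem {G : SimpleGraph V} {T : Set V} {x y : V}
    (p : (Restrict G T).Walk x y) (hx : x ∈ T) : ∀ i, p.getVert i ∈ T := by
  induction p with
  | nil => intro i; simpa using hx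
  | cons h q ih =>
    intro i
    cases i with
    | zero => simpa using hx
    | succ i => exact q.getVert_cons_succ h ▸ ih h.2.2 i

lemma seg {H : SimpleGraph V} {x y : V} (p : H.Walk x y) (i : ℕ) :
    ∀ j, i ≤ j → j ≤ p.length →
      ∃ w : H.Walk (p.getVert i) (p.getVert j), w.length = j - i := by
  intro j
  induction j with
  | zero =>
    intro hij _
    obtain rfl : i = 0 := Nat.le_zero.mp hij
    exact ⟨Walk.nil, rfl⟩
  | succ j ih =>
    intro hij hj
    rcases Nat.eq_or_lt_of_le hij with h | h
    · subst h; exact ⟨Walk.nil, by simp⟩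
    · obtain ⟨w, hw⟩ := ih (by omega) (by omega)
      exact ⟨w.concat (p.adj_getVert_succ (by omega)), by
        rw [Walk.length_concat]; omega⟩

lemma getVert_inj {H : SimpleGraph V} {x y : V} {p : H.Walk x y} (hp : p.IsPath) :
    ∀ i, i ≤ p.length → ∀ j, j ≤ p.length → p.getVert i = p.getVert j → i = j := by
  induction p with
  | nil => intro i hi j hj _; simp only [Walk.length_nil] at hi hj; omega
  | cons h q ih =>
    rw [Walk.cons_isPath_iff] at hp
    intro i hi j hj heq
    match i, j with
    | 0, 0 => rfl
    | 0, j+1 =>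
      exfalso
      apply hp.2
      rw [Walk.mem_support_iff_exists_getVert]
      refine ⟨j, ?_, ?_⟩
      · rw [← q.getVert_cons_succ h, ← heq, Walk.getVert_zero]
      · simp only [Walk.length_cons] at hj; omega
    | i+1, 0 =>
      exfalso
      apply hp.2
      rw [Walk.mem_support_iff_exists_getVert]
      refine ⟨i, ?_, ?_⟩
      · rw [← q.getVert_cons_succ h, heq, Walk.getVert_zero]
      · simp only [Walk.length_cons] at hi; omega
    | i+1, j+1 =>
      have := ih hp.1 i (by simp only [Walk.length_cons] at hi; omega)
        j (by simp only [Walk.length_cons] at hj; omega)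
        (by rwa [q.getVert_cons_succ h, q.getVert_cons_succ h] at heq)
      omega

lemma minpath {H : SimpleGraph V} {x y : V} (h : H.Reachable x y) (hxy : x ≠ y)
    (hnadj : ¬ H.Adj x y) :
    ∃ p : H.Walk x y, p.IsPath ∧ (∀ w : H.Walk x y, p.length ≤ w.length) ∧ 2 ≤ p.length := by
  haveI := Classical.decEq V
  obtain ⟨p0, hp0⟩ := h.exists_walk_length_eq_dist
  have hle : p0.bypass.length ≤ H.dist x y := hp0 ▸ p0.length_bypass_le
  have heq : p0.bypass.length = H.dist x y := le_antisymm hle (dist_le p0.bypass)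
  refine ⟨p0.bypass, p0.bypass_isPath, fun w => heq ▸ dist_le w, ?_⟩
  by_contra hlt
  interval_cases hl : p0.bypass.length
  · exact hxy ((p0.bypass.getVert_zero).symm.trans (p0.bypass.getVert_of_length_le (by omega)))
  · apply hnadj
    have := p0.bypass.adj_getVert_succ (i := 0) (by omega)
    rwa [p0.bypass.getVert_zero, show (0+1 : ℕ) = p0.bypass.length from by omega,
      p0.bypass.getVert_length] at this

lemma two_paths_adj (G : SimpleGraph V) (hG : IsChordal G) (A B : Set V)
    (hdisj : ∀ u, u ∈ A → u ∉ B)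
    (hnoedge : ∀ u ∈ A, ∀ v ∈ B, ¬ G.Adj u v)
    (x y : V) (hxA : x ∉ A) (hxB : x ∉ B) (hyA : y ∉ A) (hyB : y ∉ B) (hxy : x ≠ y)
    (hA : (Restrict G (A ∪ {x, y})).Reachable x y)
    (hB : (Restrict G (B ∪ {x, y})).Reachable x y) :
    G.Adj x y := by
  by_contra hadj
  set T : Set V := A ∪ {x, y} with hT
  set U : Set V := B ∪ {x, y} with hU
  have hxT : x ∈ T := by simp [hT]
  have hxU : x ∈ U := by simp [hU]
  obtain ⟨p, hp, hpmin, hk2⟩ := minpath hA hxy (fun h => hadj h.1)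
  obtain ⟨q, hq, hqmin, hm2⟩ := minpath hB hxy (fun h => hadj h.1)
  set k := p.length with hkdef
  set m := q.length with hmdef
  set n := k + m with hn
  have hx0 : p.getVert 0 = x := p.getVert_zero
  have hyk : p.getVert k = y := p.getVert_length
  have hq0 : q.getVert 0 = x := q.getVert_zero
  have hym : q.getVert m = y := q.getVert_length
  have hpT : ∀ i, p.getVert i ∈ T := walk_mem p hxT
  have hqU : ∀ i, q.getVert i ∈ U := walk_mem q hxU
  have hpA : ∀ i, 0 < i → i < k → p.getVert i ∈ A := by
    intro i h0 hik
    rcases hpT i with h | h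
    · exact h
    · exfalso
      simp only [Set.mem_insert_iff, Set.mem_singleton_iff] at h
      rcases h with h | h
      · have := getVert_inj hp i (by omega) 0 (by omega) (by rw [h, hx0]); omega
      · have := getVert_inj hp i (by omega) k (by omega) (by rw [h, hyk]); omega
  have hqB : ∀ i, 0 < i → i < m → q.getVert i ∈ B := by
    intro i h0 hik
    rcases hqU i with h | h
    · exact h
    · exfalso
      simp only [Set.mem_insert_iff, Set.mem_singleton_iff] at h
      rcases h with h | h
      · have := getVert_inj hq i (by omega) 0 (by omega) (by rw [h, hq0]); omega
      · have := getVert_inj hq i (by omega) m (by omega) (by rw [h, hym]); omega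
  set c : ℕ → V := fun t => if t ≤ k then p.getVert t else q.getVert (n - t) with hc
  have hcp : ∀ t, t ≤ k → c t = p.getVert t := by
    intro t ht; simp only [hc]; rw [if_pos ht]
  have hcq : ∀ t, k ≤ t → t < n → c t = q.getVert (n - t) := by
    intro t hkt htn
    rcases Nat.eq_or_lt_of_le hkt with h | h
    · have ht : t = k := h.symm
      subst ht
      rw [hcp k le_rfl, hyk, show n - k = m from by omega, hym]
    · simp only [hc]; rw [if_neg (by omega)]
  have hc0 : c 0 = x := by rw [hcp 0 (by omega), hx0]
  have hcA : ∀ t, 0 < t → t < k → c t ∈ A := by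
    intro t h1 h2; rw [hcp t (by omega)]; exact hpA t h1 h2
  have hcB : ∀ t, k < t → t < n → c t ∈ B := by
    intro t h1 h2; rw [hcq t (by omega) h2]; exact hqB (n - t) (by omega) (by omega)
  have hcnB : ∀ t, t ≤ k → c t ∉ B := by
    intro t ht
    rw [hcp t ht]
    rcases hpT t with h | h
    · exact hdisj _ h
    · simp only [Set.mem_insert_iff, Set.mem_singleton_iff] at h
      rcases h with h | h <;> rw [h] <;> assumption
  have cinj : ∀ u, u < n → ∀ v, v < n → c u = c v → u = v := by
    intro u hu v hv heq
    by_cases huk : u ≤ k <;> by_cases hvk : v ≤ k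
    · rw [hcp u huk, hcp v hvk] at heq
      exact getVert_inj hp u huk v hvk heq
    · exact absurd (heq ▸ hcB v (by omega) hv) (hcnB u huk)
    · exact absurd (heq ▸ hcB u (by omega) hu) (fun hh => hcnB v hvk (heq ▸ hh))
    · rw [hcq u (by omega) hu, hcq v (by omega) hv] at heq
      have := getVert_inj hq (n - u) (by omega) (n - v) (by omega) heq
      omega
  haveI : NeZero n := ⟨by omega⟩
  haveI : Fact (1 < n) := ⟨by omega⟩
  set f : ZMod n → V := fun i => c i.val with hf
  have hval1 : ∀ i : ZMod n, (i + 1).val = (i.val + 1) % n := by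
    intro i; rw [ZMod.val_add, ZMod.val_one]
  have finj : Function.Injective f := by
    intro i j hij
    exact ZMod.val_injective n
      (cinj i.val (ZMod.val_lt i) j.val (ZMod.val_lt j) (by simpa [hf] using hij))
  have key : ∀ u, u < n → G.Adj (c u) (c ((u + 1) % n)) := by
    intro u hu
    by_cases hun : u = n - 1
    · subst hun
      rw [show (n - 1 + 1) % n = 0 from by rw [Nat.sub_add_cancel (by omega), Nat.mod_self], hc0,
        hcq (n-1) (by omega) (by omega), show n - (n - 1) = 1 from by omega]
      have := q.adj_getVert_succ (i := 0) (by omega)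
      rw [hq0] at this
      exact this.1.symm
    · rw [Nat.mod_eq_of_lt (show u + 1 < n from by omega)]
      by_cases huk : u < k
      · rw [hcp u (by omega), hcp (u+1) (by omega)]
        exact (p.adj_getVert_succ huk).1
      · rw [hcq u (by omega) hu, hcq (u+1) (by omega) (by omega),
          show n - (u + 1) = n - u - 1 from by omega]
        have := q.adj_getVert_succ (i := n - u - 1) (by omega)
        rw [show n - u - 1 + 1 = n - u from by omega] at this
        exact this.1.symm
  have fadj : ∀ i : ZMod n, G.Adj (f i) (f (i + 1)) := by
    intro i
    simp only [hf]
    rw [hval1 i]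
    exact key i.val (ZMod.val_lt i)
  obtain ⟨i, j, hji, hji1, hjim, hadj2⟩ := hG n (by omega) f finj fadj
  have h1 : j.val ≠ i.val := fun h => hji (ZMod.val_injective n h)
  have h2 : j.val ≠ (i.val + 1) % n := by
    intro h
    exact hji1 (ZMod.val_injective n (by rw [h, hval1 i]))
  have h3 : i.val ≠ (j.val + 1) % n := by
    intro h
    apply hjim
    have hij : i = j + 1 := ZMod.val_injective n (by rw [h, hval1 j])
    rw [hij]; ring
  have hadjc : G.Adj (c i.val) (c j.val) := hadj2
  have main : ∀ u v, u < v → v < n → v ≠ (u + 1) % n → u ≠ (v + 1) % n →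
      G.Adj (c u) (c v) → False := by
    intro u v huv hv hh2 hh3 hac
    have hv2 : u + 2 ≤ v := by
      have hmod : (u + 1) % n = u + 1 := Nat.mod_eq_of_lt (by omega)
      omega
    by_cases hvk : v ≤ k
    · -- chord within p
      have hGA : (Restrict G T).Adj (p.getVert u) (p.getVert v) := by
        refine ⟨?_, hpT u, hpT v⟩
        rwa [hcp u (by omega), hcp v hvk] at hac
      obtain ⟨w1, hw1⟩ := seg p 0 u (by omega) (by omega)
      obtain ⟨w2, hw2⟩ := seg p v k (by omega) (by omega)
      have := hpmin (((w1.copy hx0 rfl).append (Walk.cons hGA w2)).copy rfl hyk)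
      rw [Walk.length_copy, Walk.length_append, Walk.length_copy, Walk.length_cons] at this
      omega
    · by_cases hu0 : u = 0
      · subst hu0
        have hvn : v ≠ n - 1 := by
          intro h
          exact hh3 (by rw [h, Nat.sub_add_cancel (by omega), Nat.mod_self])
        have hb2 : 2 ≤ n - v := by omega
        have hGB : (Restrict G U).Adj (q.getVert 0) (q.getVert (n - v)) := by
          refine ⟨?_, hqU 0, hqU _⟩
          rwa [hc0, ← hq0, hcq v (by omega) hv] at hac
        obtain ⟨w2, hw2⟩ := seg q (n - v) m (by omega) (by omega)
        have := hqmin ((Walk.cons hGB w2).copy hq0 hym)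
        rw [Walk.length_copy, Walk.length_cons] at this
        omega
      · by_cases huk : u < k
        · exact hnoedge _ (hcA u (by omega) huk) _ (hcB v (by omega) hv) hac
        · -- chord within q
          have hGB : (Restrict G U).Adj (q.getVert (n - v)) (q.getVert (n - u)) := by
            refine ⟨?_, hqU _, hqU _⟩
            have := hac.symm
            rwa [hcq v (by omega) hv, hcq u (by omega) (by omega)] at this
          obtain ⟨w1, hw1⟩ := seg q 0 (n - v) (by omega) (by omega)
          obtain ⟨w2, hw2⟩ := seg q (n - u) m (by omega) (by omega)
          have := hqmin (((w1.copy hq0 rfl).append (Walk.cons hGB w2)).copy rfl hym)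
          rw [Walk.length_copy, Walk.length_append, Walk.length_copy, Walk.length_cons] at this
          omega
  rcases Nat.lt_trichotomy i.val j.val with h | h | h
  · exact main i.val j.val h (ZMod.val_lt j) h2 h3 hadjc
  · exact h1 h.symm
  · exact main j.val i.val h (ZMod.val_lt i) h3 h2 hadjc.symm

end ChordalAux
namespace ChordalAux
universe u
variable {V : Type u}

lemma reach_not_mem {G : SimpleGraph V} {S : Set V} {c v : V}
    (h : (Restrict G Sᶜ).Reachable c v) (hc : c ∉ S) : v ∉ S := by
  obtain ⟨w⟩ := h
  have := walk_mem w (by simpa using hc) w.length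
  rw [w.getVert_length] at this
  simpa using this

lemma nbr {G : SimpleGraph V} {S : Set V} {x : V} (hx : x ∈ S) :
    ∀ {c d : V} (w : (Restrict G (S \ {x})ᶜ).Walk c d), c ∉ S → x ∈ w.support →
      ∃ u, G.Adj x u ∧ (Restrict G Sᶜ).Reachable c u := by
  intro c d w
  induction w with
  | nil =>
    intro hc hxw
    rw [Walk.support_nil, List.mem_singleton] at hxw
    exact absurd (hxw ▸ hx) hc
  | @cons a m d h q ih =>
    intro hc hxw
    rw [Walk.support_cons] at hxw
    rcases List.mem_cons.mp hxw with h1 | h1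
    · exact absurd (h1 ▸ hx) hc
    · by_cases hm : m = x
      · subst hm
        exact ⟨a, h.1.symm, Reachable.refl a⟩
      · have hmS : m ∉ S := by
          have h2 := h.2.2
          simp only [Set.mem_compl_iff, Set.mem_diff, Set.mem_singleton_iff] at h2
          tauto
        obtain ⟨u, hu1, hu2⟩ := ih hmS h1
        exact ⟨u, hu1, (SimpleGraph.Adj.reachable
          (⟨h.1, by simpa using hc, by simpa using hmS⟩ :
            (Restrict G Sᶜ).Adj a m)).trans hu2⟩

lemma transfer_avoid {G : SimpleGraph V} {S : Set V} {x : V} :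
    ∀ {c d : V} (w : (Restrict G (S \ {x})ᶜ).Walk c d), x ∉ w.support →
      (Restrict G Sᶜ).Reachable c d := by
  intro c d w
  induction w with
  | nil => intro _; exact Reachable.refl _
  | @cons a m d h q ih =>
    intro hxw
    rw [Walk.support_cons] at hxw
    have hxa : x ≠ a := fun hh => hxw (by subst hh; exact List.mem_cons_self)
    have hxq : x ∉ q.support := fun hh => hxw (List.mem_cons_of_mem _ hh)
    have hxm : x ≠ m := fun hh => hxq (hh ▸ q.start_mem_support)
    have haS : a ∉ S := by
      have h2 := h.2.1
      simp only [Set.mem_compl_iff, Set.mem_diff, Set.mem_singleton_iff] at h2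
      tauto
    have hmS : m ∉ S := by
      have h2 := h.2.2
      simp only [Set.mem_compl_iff, Set.mem_diff, Set.mem_singleton_iff] at h2
      tauto
    exact (SimpleGraph.Adj.reachable
      (⟨h.1, by simpa using haS, by simpa using hmS⟩ :
        (Restrict G Sᶜ).Adj a m)).trans (ih hxq)

lemma reach_restrict {G : SimpleGraph V} {S T : Set V} {a : V}
    (hT : {z | (Restrict G Sᶜ).Reachable a z} ⊆ T) :
    ∀ {u v : V} (w : (Restrict G Sᶜ).Walk u v), (Restrict G Sᶜ).Reachable a u →
      (Restrict G T).Reachable u v := by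
  intro u v w
  induction w with
  | nil => intro _; exact Reachable.refl _
  | @cons u m d h q ih =>
    intro hu
    have hm : (Restrict G Sᶜ).Reachable a m := hu.trans h.reachable
    exact (SimpleGraph.Adj.reachable
      (⟨h.1, hT hu, hT hm⟩ : (Restrict G T).Adj u m)).trans (ih hm)

def Simp (G : SimpleGraph V) (v : V) : Prop :=
  ∀ a b : V, G.Adj v a → G.Adj v b → a ≠ b → G.Adj a b

lemma side {V : Type u} [Fintype V] {N : ℕ} (G : SimpleGraph V) (hG : IsChordal G)
    (hcard : Fintype.card V ≤ N + 1)
    (ih : ∀ (W : Type u) [Fintype W] (H : SimpleGraph W), Fintype.card W ≤ N → IsChordal H →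
       (∀ x y : W, x ≠ y → H.Adj x y) ∨
       ∃ v w : W, v ≠ w ∧ ¬ H.Adj v w ∧ Simp H v ∧ Simp H w)
    (a b : V) (hab : a ≠ b) (hnadj : ¬ G.Adj a b)
    (S : Finset V) (haS : a ∉ S) (hbS : b ∉ S)
    (hsep : ¬ (Restrict G (↑S : Set V)ᶜ).Reachable a b)
    (hmin : ∀ s : Finset V, a ∉ s → b ∉ s → ¬ (Restrict G (↑s : Set V)ᶜ).Reachable a b →
      S.card ≤ s.card) :
    ∃ v : V, (Restrict G (↑S : Set V)ᶜ).Reachable a v ∧ Simp G v := by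
  classical
  set Sv : Set V := (↑S : Set V) with hSv
  set GS := Restrict G Svᶜ with hGS
  set A : Set V := {z | GS.Reachable a z} with hA
  set B : Set V := {z | GS.Reachable b z} with hB
  have haA : a ∈ A := Reachable.refl a
  have hbB : b ∈ B := Reachable.refl b
  have hAS : ∀ v ∈ A, v ∉ Sv := fun v hv => reach_not_mem hv (by simpa [hSv] using haS)
  have hBS : ∀ v ∈ B, v ∉ Sv := fun v hv => reach_not_mem hv (by simpa [hSv] using hbS)
  have hdisjAB : ∀ u, u ∈ A → u ∉ B := fun u hu hb => hsep (hu.trans (hb.symm))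
  have hnoedgeAB : ∀ u ∈ A, ∀ v ∈ B, ¬ G.Adj u v := fun u hu v hv hadj =>
    hsep (hu.trans ((SimpleGraph.Adj.reachable
      (⟨hadj, by simpa using hAS u hu, by simpa using hBS v hv⟩ :
        (Restrict G Svᶜ).Adj u v)).trans hv.symm))
  -- every separator vertex has neighbors in both components
  have hnb : ∀ x ∈ S, (∃ u ∈ A, G.Adj x u) ∧ (∃ u ∈ B, G.Adj x u) := by
    intro x hxS
    have hreach' : (Restrict G (Sv \ {x})ᶜ).Reachable a b := by
      have hco : ((↑(S.erase x) : Set V)) = Sv \ {x} := by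
        simp [hSv, Finset.coe_erase]
      by_contra hcon
      rw [← hco] at hcon
      have h1 := hmin (S.erase x) (fun h => haS (Finset.mem_of_mem_erase h))
        (fun h => hbS (Finset.mem_of_mem_erase h)) hcon
      have h2 := Finset.card_erase_lt_of_mem hxS
      omega
    obtain ⟨w⟩ := hreach'
    have hxSv : x ∈ Sv := by simpa [hSv] using hxS
    have hxsup : x ∈ w.support := by
      by_contra hxn
      exact hsep (transfer_avoid w hxn)
    constructor
    · obtain ⟨u, hu1, hu2⟩ := nbr hxSv w (by simpa [hSv] using haS) hxsup
      exact ⟨u, hu2, hu1⟩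
    · obtain ⟨u, hu1, hu2⟩ := nbr hxSv w.reverse (by simpa [hSv] using hbS)
        (by rw [Walk.support_reverse]; exact List.mem_reverse.mpr hxsup)
      exact ⟨u, hu2, hu1⟩
  -- S is a clique
  have hclique : ∀ x ∈ Sv, ∀ y ∈ Sv, x ≠ y → G.Adj x y := by
    intro x hx y hy hxy
    obtain ⟨⟨xa, hxa, hxa2⟩, ⟨xb, hxb, hxb2⟩⟩ := hnb x (by simpa [hSv] using hx)
    obtain ⟨⟨ya, hya, hya2⟩, ⟨yb, hyb, hyb2⟩⟩ := hnb y (by simpa [hSv] using hy)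
    apply two_paths_adj G hG A B hdisjAB hnoedgeAB x y
      (fun h => hAS x h hx) (fun h => hBS x h hx)
      (fun h => hAS y h hy) (fun h => hBS y h hy) hxy
    · -- reachability through A
      have h1 : (Restrict G (A ∪ {x, y})).Adj x xa := ⟨hxa2, by simp, Or.inl hxa⟩
      have h2 : (Restrict G (A ∪ {x, y})).Adj ya y := ⟨hya2.symm, Or.inl hya, by simp⟩
      obtain ⟨wm⟩ := (hxa.symm.trans hya : GS.Reachable xa ya)
      exact (h1.reachable).trans
        ((reach_restrict (T := A ∪ {x, y}) (fun z hz => Or.inl hz) wm hxa).trans h2.reachable)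
    · -- reachability through B
      have h1 : (Restrict G (B ∪ {x, y})).Adj x xb := ⟨hxb2, by simp, Or.inl hxb⟩
      have h2 : (Restrict G (B ∪ {x, y})).Adj yb y := ⟨hyb2.symm, Or.inl hyb, by simp⟩
      obtain ⟨wm⟩ := (hxb.symm.trans hyb : (Restrict G Svᶜ).Reachable xb yb)
      exact (h1.reachable).trans
        ((reach_restrict (T := B ∪ {x, y}) (fun z hz => Or.inl hz) wm hxb).trans h2.reachable)
  -- the induced graph on A ∪ S
  set Wt : Set V := A ∪ Sv with hWt
  have hbW : b ∉ Wt := by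
    intro h
    rcases h with h | h
    · exact hdisjAB b h hbB
    · exact hbS (by simpa [hSv] using h)
  haveI hdec : DecidablePred (· ∈ Wt) := Classical.decPred _
  haveI : Fintype ↥Wt := Subtype.fintype _
  have hcardW : Fintype.card ↥Wt ≤ N := by
    have hlt : Fintype.card ↥Wt < Fintype.card V := by
      have h := Fintype.card_subtype_lt (p := (· ∈ Wt)) (x := b) hbW
      convert h using 2
    omega
  set G' : SimpleGraph ↥Wt := SimpleGraph.comap (Subtype.val) G with hG'def
  have hG' : IsChordal G' := by
    intro n hn f hf hadj
    obtain ⟨i, j, h1, h2, h3, h4⟩ := hG n hn (fun i => (f i).val)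
      (fun i j h => hf (Subtype.val_injective h)) hadj
    exact ⟨i, j, h1, h2, h3, h4⟩
  have htrans : ∀ z : ↥Wt, (z : V) ∈ A → Simp G' z → Simp G (z : V) := by
    intro z hzA hz c d h1 h2 hcd
    have hc : c ∈ Wt := by
      by_cases hcS : c ∈ Sv
      · exact Or.inr hcS
      · exact Or.inl (hzA.trans (SimpleGraph.Adj.reachable
          (⟨h1, by simpa using hAS _ hzA, by simpa using hcS⟩ :
            (Restrict G Svᶜ).Adj _ c)))
    have hd : d ∈ Wt := by
      by_cases hdS : d ∈ Sv
      · exact Or.inr hdS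
      · exact Or.inl (hzA.trans (SimpleGraph.Adj.reachable
          (⟨h2, by simpa using hAS _ hzA, by simpa using hdS⟩ :
            (Restrict G Svᶜ).Adj _ d)))
    exact hz ⟨c, hc⟩ ⟨d, hd⟩ h1 h2 (fun hh => hcd (congrArg Subtype.val hh))
  rcases ih ↥Wt G' hcardW hG' with hcomp | ⟨v, w, hvw, hnadj', hv, hw⟩
  · refine ⟨a, Reachable.refl a, htrans ⟨a, Or.inl haA⟩ haA ?_⟩
    intro c d _ _ hcd
    exact hcomp c d hcd
  · have hone : (v : V) ∈ A ∨ (w : V) ∈ A := by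
      by_contra hcon
      push_neg at hcon
      have hvS : (v : V) ∈ Sv := by
        rcases v.2 with h | h
        · exact absurd h hcon.1
        · exact h
      have hwS : (w : V) ∈ Sv := by
        rcases w.2 with h | h
        · exact absurd h hcon.2
        · exact h
      exact hnadj' (hclique _ hvS _ hwS (fun hh => hvw (Subtype.ext hh)))
    rcases hone with hvA | hwA
    · exact ⟨(v : V), hvA, htrans v hvA hv⟩
    · exact ⟨(w : V), hwA, htrans w hwA hw⟩

end ChordalAux
namespace ChordalAux
universe u

lemma dirac_aux : ∀ (N : ℕ) (V : Type u) [Fintype V] (G : SimpleGraph V),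
    Fintype.card V ≤ N → IsChordal G →
    (∀ x y : V, x ≠ y → G.Adj x y) ∨
    ∃ v w : V, v ≠ w ∧ ¬ G.Adj v w ∧ Simp G v ∧ Simp G w := by
  intro N
  induction N with
  | zero =>
    intro V _ G hcard _
    left
    intro x
    have : IsEmpty V := Fintype.card_eq_zero_iff.mp (by omega)
    exact this.elim x
  | succ N ihN =>
    intro V _ G hcard hG
    by_cases hcomp : ∀ x y : V, x ≠ y → G.Adj x y
    · exact Or.inl hcomp
    right
    push_neg at hcomp
    obtain ⟨a, b, hab, hnadj⟩ := hcomp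
    classical
    have hP0 : ∃ s : Finset V, a ∉ s ∧ b ∉ s ∧
        ¬ (Restrict G (↑s : Set V)ᶜ).Reachable a b := by
      refine ⟨(Finset.univ.erase a).erase b, ?_, ?_, ?_⟩
      · intro h
        exact Finset.notMem_erase a _ (Finset.mem_of_mem_erase h)
      · exact Finset.notMem_erase b _
      · rintro ⟨w⟩
        cases w with
        | nil => exact hab rfl
        | @cons _ m _ h q =>
          have hm := h.2.2
          simp only [Set.mem_compl_iff, Finset.coe_erase, Set.mem_diff,
            Set.mem_singleton_iff, Finset.coe_univ, Set.mem_univ, true_and,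
            Finset.mem_coe, Finset.mem_erase, not_and, not_not] at hm
          rcases Classical.em (m = b) with hb | hb
          · exact hnadj (hb ▸ h.1)
          · have hma : m = a := by tauto
            exact G.loopless.irrefl a (hma ▸ h.1)
    obtain ⟨s0, hs0⟩ := hP0
    set P : Finset V → Prop := fun s => a ∉ s ∧ b ∉ s ∧
      ¬ (Restrict G (↑s : Set V)ᶜ).Reachable a b with hP
    obtain ⟨S, hSmem, hSmin⟩ := Finset.exists_min_image
      (Finset.univ.filter P) Finset.card ⟨s0, by simp [P, hs0.1, hs0.2.1, hs0.2.2]⟩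
    rw [Finset.mem_filter] at hSmem
    obtain ⟨-, haS, hbS, hsep⟩ := hSmem
    have hmin : ∀ s : Finset V, a ∉ s → b ∉ s →
        ¬ (Restrict G (↑s : Set V)ᶜ).Reachable a b → S.card ≤ s.card := by
      intro s h1 h2 h3
      exact hSmin s (by simp [P, h1, h2, h3])
    have ih' : ∀ (W : Type u) [Fintype W] (H : SimpleGraph W), Fintype.card W ≤ N →
        IsChordal H → (∀ x y : W, x ≠ y → H.Adj x y) ∨
        ∃ v w : W, v ≠ w ∧ ¬ H.Adj v w ∧ Simp H v ∧ Simp H w :=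
      fun W _ H h1 h2 => ihN W H h1 h2
    obtain ⟨vA, hvA, hvAs⟩ := side G hG hcard ih' a b hab hnadj S haS hbS hsep hmin
    obtain ⟨vB, hvB, hvBs⟩ := side G hG hcard ih' b a hab.symm (fun h => hnadj h.symm)
      S hbS haS (fun h => hsep h.symm)
      (fun s h1 h2 h3 => hmin s h2 h1 (fun hh => h3 hh.symm))
    refine ⟨vA, vB, ?_, ?_, hvAs, hvBs⟩
    · intro h
      exact hsep (hvA.trans (h ▸ hvB).symm)
    · intro hadj
      have h1 := reach_not_mem hvA (by simpa using haS)
      have h2 := reach_not_mem hvB (by simpa using hbS)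
      exact hsep (hvA.trans ((SimpleGraph.Adj.reachable
        (⟨hadj, by simpa using h1, by simpa using h2⟩ :
          (Restrict G (↑S : Set V)ᶜ).Adj vA vB)).trans hvB.symm))

end ChordalAux

/-- Every finite chordal graph with at least one vertex has a simplicial vertex. -/
theorem chordal_has_simplicial {V : Type*} [Fintype V] [Nonempty V]
    (G : SimpleGraph V) (hG : IsChordal G) :
    ∃ v : V, ∀ a ∈ G.neighborSet v, ∀ b ∈ G.neighborSet v, a ≠ b → G.Adj a b := by
  rcases ChordalAux.dirac_aux (Fintype.card V) V G le_rfl hG with hcomp | ⟨v, _, _, _, hv, _⟩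
  · obtain ⟨v⟩ := ‹Nonempty V›
    exact ⟨v, fun a _ b _ hab => hcomp a b hab⟩
  · exact ⟨v, fun a ha b hb hab => hv a b ha hb hab⟩
end

section
/- A finite simple graph is chordal if and only if it admits a perfect elimination ordering, i.e., an ordering v_1, ..., v_n of its vertices such that for each i, the neighbors of v_i among v_{i+1}, ..., v_n form a clique. -/
namespace ChordalPEO
variable {V : Type*} (G : SimpleGraph V)

/-- `Valid G A x y L`: `L` is a walk in `G` from `x` to `y` whose interior vertices satisfy `A`.
Indexing is by the total function `List.getD` with default `x`. -/
structure Valid (A : V → Prop) (x y : V) (L : List V) : Prop where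
  pos : 0 < L.length
  head : L.getD 0 x = x
  last : L.getD (L.length - 1) x = y
  chain : ∀ i, i + 1 < L.length → G.Adj (L.getD i x) (L.getD (i + 1) x)
  interior : ∀ i, 0 < i → i + 1 < L.length → A (L.getD i x)

variable {G}

lemma getD_map_range (n i : ℕ) (g : ℕ → V) (d : V) :
    ((List.range n).map g).getD i d = if i < n then g i else d := by
  split_ifs with h
  · rw [List.getD_eq_getElem _ _ (by simpa using h)]
    simp
  · exact List.getD_eq_default _ _ (by simpa using Nat.le_of_not_lt h)

lemma valid_transform {A : V → Prop} {x y : V} {L : List V} (hL : Valid G A x y L)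
    (n : ℕ) (p : ℕ → ℕ) (hn : 0 < n) (hp : ∀ w, w < n → p w < L.length)
    (h0 : p 0 = 0) (hlast : L.getD (p (n - 1)) x = y)
    (hstep : ∀ w, w + 1 < n → G.Adj (L.getD (p w) x) (L.getD (p (w + 1)) x))
    (hint : ∀ w, 0 < w → w + 1 < n → 0 < p w ∧ p w + 1 < L.length) :
    Valid G A x y ((List.range n).map fun w => L.getD (p w) x) := by
  have hlen : ((List.range n).map fun w => L.getD (p w) x).length = n := by simp
  constructor
  · omega
  · rw [getD_map_range, if_pos hn, h0, hL.head]
  · rw [hlen, getD_map_range, if_pos (by omega), hlast]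
  · intro i hi
    rw [hlen] at hi
    rw [getD_map_range, getD_map_range, if_pos (by omega), if_pos (by omega)]
    exact hstep i hi
  · intro i hi0 hi
    rw [hlen] at hi
    rw [getD_map_range, if_pos (by omega)]
    obtain ⟨h1, h2⟩ := hint i hi0 hi
    exact hL.interior _ h1 h2

/-- In a minimal-length valid walk there is no chord. -/
lemma not_adj_of_min {A : V → Prop} {x y : V} {L : List V} (hL : Valid G A x y L)
    (hmin : ∀ M, Valid G A x y M → L.length ≤ M.length)
    {u v : ℕ} (hv : v < L.length) (huv : u + 2 ≤ v) :
    ¬ G.Adj (L.getD u x) (L.getD v x) := by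
  intro hadj
  have h2 := valid_transform hL (u + 1 + (L.length - v))
      (fun w => if w ≤ u then w else w + (v - u - 1)) (by omega)
      (fun w hw => by split_ifs <;> omega)
      (by simp) ?_ ?_ ?_
  · have := hmin _ h2
    simp at this; omega
  · rw [show (u + 1 + (L.length - v) - 1) = u + (L.length - v) from by omega,
      if_neg (by omega), show u + (L.length - v) + (v - u - 1) = L.length - 1 from by omega]
    exact hL.last
  · intro w hw
    rcases lt_trichotomy w u with h | rfl | h
    · rw [if_pos (by omega), if_pos (by omega)]
      exact hL.chain _ (by omega)
    · rw [if_pos le_rfl, if_neg (by omega),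
        show w + 1 + (v - w - 1) = v from by omega]
      exact hadj
    · rw [if_neg (by omega), if_neg (by omega),
        show w + 1 + (v - u - 1) = w + (v - u - 1) + 1 from by omega]
      exact hL.chain _ (by omega)
  · intro w hw0 hw
    split_ifs <;> omega

/-- A minimal-length valid walk has pairwise-distinct vertices. -/
lemma getD_ne_of_min {A : V → Prop} {x y : V} {L : List V} (hL : Valid G A x y L)
    (hmin : ∀ M, Valid G A x y M → L.length ≤ M.length)
    {u v : ℕ} (hv : v < L.length) (huv : u < v) :
    L.getD u x ≠ L.getD v x := by
  intro heq
  have h2 := valid_transform hL (L.length - (v - u))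
      (fun w => if w ≤ u then w else w + (v - u)) (by omega)
      (fun w hw => by split_ifs <;> omega)
      (by simp) ?_ ?_ ?_
  · have := hmin _ h2
    simp at this; omega
  · by_cases h : L.length - (v - u) - 1 ≤ u
    · rw [if_pos h]
      have hu : L.length - (v - u) - 1 = u := by omega
      have hv' : v = L.length - 1 := by omega
      rw [hu, heq, hv']
      exact hL.last
    · rw [if_neg h, show L.length - (v - u) - 1 + (v - u) = L.length - 1 from by omega]
      exact hL.last
  · intro w hw
    rcases lt_trichotomy w u with h | rfl | h
    · rw [if_pos (by omega), if_pos (by omega)]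
      exact hL.chain _ (by omega)
    · rw [if_pos le_rfl, if_neg (by omega), show w + 1 + (v - w) = v + 1 from by omega, heq]
      exact hL.chain _ (by omega)
    · rw [if_neg (by omega), if_neg (by omega),
        show w + 1 + (v - u) = w + (v - u) + 1 from by omega]
      exact hL.chain _ (by omega)
  · intro w hw0 hw
    split_ifs <;> omega

lemma exists_min_valid {A : V → Prop} {x y : V} (h : ∃ L, Valid G A x y L) :
    ∃ L, Valid G A x y L ∧ ∀ M, Valid G A x y M → L.length ≤ M.length := by
  classical
  have h' : ∃ n, ∃ L, L.length = n ∧ Valid G A x y L := by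
    obtain ⟨L, hL⟩ := h; exact ⟨L.length, L, rfl, hL⟩
  obtain ⟨L, hLl, hL⟩ := Nat.find_spec h'
  refine ⟨L, hL, fun M hM => ?_⟩
  rw [hLl]
  exact Nat.find_le ⟨M, rfl, hM⟩

lemma three_le_length {A : V → Prop} {x y : V} {L : List V} (hL : Valid G A x y L)
    (hxy : ¬ G.Adj x y) (hne : x ≠ y) : 3 ≤ L.length := by
  have h1 := hL.pos
  by_contra h
  have : L.length = 1 ∨ L.length = 2 := by omega
  rcases this with h | h
  · exact hne (by rw [← hL.head, ← hL.last, h])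
  · have := hL.chain 0 (by omega)
    rw [hL.head, show (0 + 1 : ℕ) = L.length - 1 from by omega, hL.last] at this
    exact hxy this

lemma chord_sep (hc : IsChordal G) {x y : V} (hxy : ¬ G.Adj x y) (hne : x ≠ y)
    {A B : V → Prop}
    (hAB : ∀ p q, A p → B q → ¬ G.Adj p q)
    (hABd : ∀ z, A z → B z → False)
    (hxA : ¬ A x) (hyA : ¬ A y) (hxB : ¬ B x) (hyB : ¬ B y)
    (hPex : ∃ L, Valid G A x y L) (hQex : ∃ L, Valid G B x y L) : False := by
  obtain ⟨P, hP, hPmin⟩ := exists_min_valid hPex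
  obtain ⟨Q, hQ, hQmin⟩ := exists_min_valid hQex
  have hP3 : 3 ≤ P.length := three_le_length hP hxy hne
  have hQ3 : 3 ≤ Q.length := three_le_length hQ hxy hne
  obtain ⟨k, hkP⟩ : ∃ k, P.length = k + 1 := ⟨P.length - 1, by omega⟩
  obtain ⟨m, hmQ⟩ : ∃ m, Q.length = m + 1 := ⟨Q.length - 1, by omega⟩
  obtain ⟨n, hn⟩ : ∃ n, n = k + m := ⟨_, rfl⟩
  have hk2 : 2 ≤ k := by omega
  have hm2 : 2 ≤ m := by omega
  have hn4 : 4 ≤ n := by omega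
  haveI : NeZero n := ⟨by omega⟩
  haveI : Fact (1 < n) := ⟨by omega⟩
  set g : ℕ → V := fun w => if w ≤ k then P.getD w x else Q.getD (n - w) x with hg
  have hgP : ∀ w, w ≤ k → g w = P.getD w x := fun w hw => by rw [hg]; exact if_pos hw
  have hgQ : ∀ w, k < w → g w = Q.getD (n - w) x := fun w hw => by
    rw [hg]; exact if_neg (by omega)
  have hPy : P.getD k x = y := by rw [show k = P.length - 1 from by omega]; exact hP.last
  have hQy : Q.getD m x = y := by rw [show m = Q.length - 1 from by omega]; exact hQ.last
  have hQx : Q.getD 0 x = x := hQ.head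
  have hPx : P.getD 0 x = x := hP.head
  have hPA : ∀ w, 0 < w → w < k → A (P.getD w x) := fun w h1 h2 =>
    hP.interior w h1 (by omega)
  have hQB : ∀ w, 0 < w → w < m → B (Q.getD w x) := fun w h1 h2 =>
    hQ.interior w h1 (by omega)
  -- injectivity of g on [0, n)
  have ginj : ∀ u v, v < n → u < v → g u ≠ g v := by
    intro u v hvn huv heq
    by_cases hvk : v ≤ k
    · rw [hgP u (by omega), hgP v hvk] at heq
      exact getD_ne_of_min hP hPmin (u := u) (v := v) (by omega) huv heq
    · by_cases huk : u ≤ k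
      · rw [hgQ v (by omega)] at heq
        have hB : B (Q.getD (n - v) x) := hQB _ (by omega) (by omega)
        rw [← heq] at hB
        rcases Nat.lt_or_ge u k with hu | hu
        · rcases Nat.eq_zero_or_pos u with rfl | hu0
          · rw [hgP 0 (by omega), hPx] at hB
            exact hxB hB
          · rw [hgP u (by omega)] at hB
            exact hABd _ (hPA u hu0 hu) hB
        · have huk' : u = k := by omega
          rw [huk', hgP k le_rfl, hPy] at hB
          exact hyB hB
      · rw [hgQ u (by omega), hgQ v (by omega)] at heq
        exact getD_ne_of_min hQ hQmin (u := n - v) (v := n - u) (by omega) (by omega) heq.symm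
  have hfinj : Function.Injective (fun i : ZMod n => g i.val) := by
    intro i j hij
    simp only at hij
    by_contra hne'
    have hv : i.val ≠ j.val := fun h => hne' (ZMod.val_injective n h)
    rcases lt_trichotomy i.val j.val with h | h | h
    · exact ginj _ _ (ZMod.val_lt j) h hij
    · exact hv h
    · exact ginj _ _ (ZMod.val_lt i) h hij.symm
  have hadjstep : ∀ u, u < n → G.Adj (g u) (g ((u + 1) % n)) := by
    intro u hu
    rcases Nat.lt_or_ge (u + 1) n with h | h
    · rw [Nat.mod_eq_of_lt h]
      rcases Nat.lt_or_ge u k with huk | huk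
      · rw [hgP u (by omega), hgP (u + 1) (by omega)]
        exact hP.chain u (by omega)
      · by_cases hueq : u = k
        · subst hueq
          rw [hgP u le_rfl, hPy, hgQ (u + 1) (by omega),
            show n - (u + 1) = m - 1 from by omega]
          have h2 := hQ.chain (m - 1) (by omega)
          rw [show m - 1 + 1 = m from by omega, hQy] at h2
          exact h2.symm
        · rw [hgQ u (by omega), hgQ (u + 1) (by omega)]
          have h2 := hQ.chain (n - (u + 1)) (by omega)
          rw [show n - (u + 1) + 1 = n - u from by omega] at h2
          exact h2.symm
    · rw [show (u + 1) % n = 0 from by rw [show u + 1 = n from by omega, Nat.mod_self]]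
      rw [hgQ u (by omega), hgP 0 (by omega), hPx, show n - u = 1 from by omega]
      have h2 := hQ.chain 0 (by omega)
      rw [hQx] at h2
      exact h2.symm
  have hadj : ∀ i : ZMod n, G.Adj ((fun i : ZMod n => g i.val) i)
      ((fun i : ZMod n => g i.val) (i + 1)) := by
    intro i
    simp only
    rw [show (i + 1).val = (i.val + 1) % n from by rw [ZMod.val_add, ZMod.val_one]]
    exact hadjstep i.val (ZMod.val_lt i)
  -- key case analysis on a chord
  have key : ∀ u v, v < n → u < v → (u + 1) % n ≠ v → (v + 1) % n ≠ u →
      G.Adj (g u) (g v) → False := by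
    intro u v hvn huv h2 h3 hadj'
    have huv2 : u + 2 ≤ v := by
      rcases Nat.eq_or_lt_of_le (Nat.succ_le_of_lt huv) with h | h
      · exact absurd ((Nat.mod_eq_of_lt (by omega)).trans h) h2
      · omega
    have hv' : ¬ (u = 0 ∧ v = n - 1) := by
      rintro ⟨rfl, rfl⟩
      exact h3 (by rw [show n - 1 + 1 = n from by omega, Nat.mod_self])
    by_cases hvk : v ≤ k
    · rw [hgP u (by omega), hgP v hvk] at hadj'
      exact not_adj_of_min hP hPmin (u := u) (v := v) (by omega) huv2 hadj'
    · by_cases huk : u ≤ k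
      · rcases Nat.lt_or_ge u k with hu | hu
        · rcases Nat.eq_zero_or_pos u with rfl | hu0
          · have hvn2 : v ≤ n - 2 := by
              rcases Nat.eq_or_lt_of_le (Nat.succ_le_of_lt hvn) with h | h
              · exact absurd ⟨rfl, by omega⟩ hv'
              · omega
            rw [hgP 0 (by omega), hPx, hgQ v (by omega)] at hadj'
            have hh := not_adj_of_min hQ hQmin (u := 0) (v := n - v) (by omega) (by omega)
            rw [hQx] at hh
            exact hh hadj'
          · rw [hgP u (by omega), hgQ v (by omega)] at hadj'
            exact hAB _ _ (hPA u hu0 hu) (hQB _ (by omega) (by omega)) hadj'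
        · have huk' : u = k := by omega
          subst huk'
          rw [hgP u le_rfl, hPy, hgQ v (by omega)] at hadj'
          have hh := not_adj_of_min hQ hQmin (u := n - v) (v := m) (by omega) (by omega)
          rw [hQy] at hh
          exact hh hadj'.symm
      · rw [hgQ u (by omega), hgQ v (by omega)] at hadj'
        exact not_adj_of_min hQ hQmin (u := n - v) (v := n - u) (by omega) (by omega) hadj'.symm
  obtain ⟨i, j, hji, hji1, hjim, hchord⟩ := hc n hn4 (fun i : ZMod n => g i.val) hfinj hadj
  have hvv : j.val ≠ i.val := fun h => hji (ZMod.val_injective n h)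
  have h2 : (i.val + 1) % n ≠ j.val := by
    intro h
    apply hji1
    apply ZMod.val_injective n
    rw [ZMod.val_add, ZMod.val_one, h]
  have h3 : (j.val + 1) % n ≠ i.val := by
    intro h
    apply hjim
    have hji' : j + 1 = i := by
      apply ZMod.val_injective n
      rw [ZMod.val_add, ZMod.val_one, h]
    rw [← hji']; ring
  have hchord' : G.Adj (g i.val) (g j.val) := hchord
  rcases lt_trichotomy i.val j.val with h | h | h
  · exact key _ _ (ZMod.val_lt j) h h2 h3 hchord'
  · exact hvv h.symm
  · exact key _ _ (ZMod.val_lt i) h h3 h2 hchord'.symm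

/-- Reachability inside a finite vertex set. -/
def Reach (G : SimpleGraph V) (t : Finset V) : V → V → Prop :=
  Relation.ReflTransGen (fun p q => p ∈ t ∧ q ∈ t ∧ G.Adj p q)

lemma reach_symm {t : Finset V} {c d : V} (h : Reach G t c d) : Reach G t d c :=
  (@Relation.ReflTransGen.symmetric _ _ ⟨fun _ _ h => ⟨h.2.1, h.1, h.2.2.symm⟩⟩).symm _ _ h

lemma reach_last_step {t : Finset V} {c z : V} (h : Reach G t c z) (hne : c ≠ z) :
    ∃ w, Reach G t c w ∧ w ∈ t ∧ G.Adj w z ∧ z ∈ t := by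
  induction h with
  | refl => exact absurd rfl hne
  | tail h1 h2 _ => exact ⟨_, h1, h2.1, h2.2.2, h2.2.1⟩

lemma first_entry [DecidableEq V] {t : Finset V} {x : V} (hx : x ∉ t) {c d : V} (hc : c ≠ x)
    (h : Reach G (insert x t) c d) :
    Reach G t c d ∨ ∃ z ∈ t, G.Adj z x ∧ Reach G t c z := by
  induction h with
  | refl => exact Or.inl Relation.ReflTransGen.refl
  | @tail e d h1 h2 ih =>
    rcases ih with hce | hright
    · by_cases hex : e = x
      · subst hex
        obtain ⟨w, _, _, _, het⟩ := reach_last_step hce hc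
        exact absurd het hx
      · have het : e ∈ t := by
          rcases Finset.mem_insert.mp h2.1 with h | h
          · exact absurd h hex
          · exact h
        by_cases hdx : d = x
        · exact Or.inr ⟨e, het, hdx ▸ h2.2.2, hce⟩
        · have hdt : d ∈ t := by
            rcases Finset.mem_insert.mp h2.2.1 with h | h
            · exact absurd h hdx
            · exact h
          exact Or.inl (hce.tail ⟨het, hdt, h2.2.2⟩)
    · exact Or.inr hright

lemma getD_congr_default (L : List V) {i : ℕ} (h : i < L.length) (a b : V) :
    L.getD i a = L.getD i b := by
  rw [List.getD_eq_getElem _ _ h, List.getD_eq_getElem _ _ h]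

lemma reach_to_list {t : Finset V} {c d : V} (h : Reach G t c d) :
    c ∈ t → ∃ L : List V, Valid G (fun z => z ∈ t) c d L ∧
      ∀ i, i < L.length → L.getD i c ∈ t := by
  induction h using Relation.ReflTransGen.head_induction_on with
  | refl =>
    intro hct
    refine ⟨[d], ⟨by simp, by simp, by simp, ?_, ?_⟩, ?_⟩
    · intro i hi; simp only [List.length_cons, List.length_nil] at hi; omega
    · intro i hi1 hi2; simp only [List.length_cons, List.length_nil] at hi2; omega
    · intro i hi; simp only [List.length_cons, List.length_nil] at hi
      interval_cases i
      simpa using hct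
  | @head c e hstep h2 ih =>
    intro hct
    obtain ⟨L, hL, hall⟩ := ih hstep.2.1
    refine ⟨c :: L, ⟨by simp, by simp, ?_, ?_, ?_⟩, ?_⟩
    · have hlen : (c :: L).length - 1 = (L.length - 1) + 1 := by
        have := hL.pos; simp; omega
      rw [hlen, List.getD_cons_succ, getD_congr_default L (by have := hL.pos; omega) c e]
      exact hL.last
    · intro i hi
      simp only [List.length_cons] at hi
      rcases Nat.eq_zero_or_pos i with rfl | hi0
      · rw [List.getD_cons_zero, List.getD_cons_succ]
        rcases Nat.eq_zero_or_pos L.length with h0 | h0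
        · omega
        · rw [getD_congr_default L (by omega) c e, hL.head]
          exact hstep.2.2
      · obtain ⟨i', rfl⟩ : ∃ i', i = i' + 1 := ⟨i - 1, by omega⟩
        rw [List.getD_cons_succ, List.getD_cons_succ,
          getD_congr_default L (by omega) c e, getD_congr_default L (by omega) c e]
        exact hL.chain i' (by omega)
    · intro i hi0 hi
      simp only [List.length_cons] at hi
      obtain ⟨i', rfl⟩ : ∃ i', i = i' + 1 := ⟨i - 1, by omega⟩
      rw [List.getD_cons_succ, getD_congr_default L (by omega) c e]
      exact hall i' (by omega)
    · intro i hi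
      simp only [List.length_cons] at hi
      rcases Nat.eq_zero_or_pos i with rfl | hi0
      · rw [List.getD_cons_zero]; exact hct
      · obtain ⟨i', rfl⟩ : ∃ i', i = i' + 1 := ⟨i - 1, by omega⟩
        rw [List.getD_cons_succ, getD_congr_default L (by omega) c e]
        exact hall i' (by omega)

lemma valid_sandwich {t : Finset V} {A : V → Prop} {x y c d : V} {L : List V}
    (hL : Valid G (fun z => z ∈ t) c d L) (hall : ∀ i, i < L.length → L.getD i c ∈ t)
    (hsub : ∀ z ∈ t, A z) (hxc : G.Adj x c) (hdy : G.Adj d y) :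
    Valid G A x y (x :: (L ++ [y])) := by
  have hpos := hL.pos
  have hlen : (x :: (L ++ [y])).length = L.length + 2 := by simp
  have hget0 : (x :: (L ++ [y])).getD 0 x = x := by simp
  have hgetmid : ∀ i, i < L.length → (x :: (L ++ [y])).getD (i + 1) x = L.getD i c := by
    intro i hi
    rw [List.getD_cons_succ, List.getD_eq_getElem _ _
        (by rw [List.length_append, List.length_singleton]; omega),
      List.getElem_append_left (by omega), ← List.getD_eq_getElem _ _ (by omega)]
  have hgetlast : (x :: (L ++ [y])).getD (L.length + 1) x = y := by
    rw [List.getD_cons_succ, List.getD_eq_getElem _ _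
      (by rw [List.length_append, List.length_singleton]; omega)]
    exact List.getElem_concat_length rfl _
  constructor
  · simp
  · exact hget0
  · rw [hlen, show L.length + 2 - 1 = L.length + 1 from by omega, hgetlast]
  · intro i hi
    rw [hlen] at hi
    rcases Nat.eq_zero_or_pos i with rfl | hi0
    · rw [hget0, show (0 + 1 : ℕ) = 0 + 1 from rfl, hgetmid 0 (by omega), hL.head]
      exact hxc
    · obtain ⟨i', rfl⟩ : ∃ i', i = i' + 1 := ⟨i - 1, by omega⟩
      rcases Nat.lt_or_ge (i' + 1) L.length with h | h
      · rw [hgetmid i' (by omega), hgetmid (i' + 1) h]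
        exact hL.chain i' (by omega)
      · have hieq : i' + 1 = L.length := by omega
        rw [hgetmid i' (by omega), show i' + 1 + 1 = L.length + 1 from by omega, hgetlast]
        have : L.getD i' c = d := by
          rw [show i' = L.length - 1 from by omega]
          exact hL.last
        rw [this]
        exact hdy
  · intro i hi0 hi
    rw [hlen] at hi
    obtain ⟨i', rfl⟩ : ∃ i', i = i' + 1 := ⟨i - 1, by omega⟩
    rw [hgetmid i' (by omega)]
    exact hsub _ (hall i' (by omega))

def SimpIn (G : SimpleGraph V) (s : Finset V) (v : V) : Prop :=
  ∀ p ∈ s, ∀ q ∈ s, p ≠ q → G.Adj v p → G.Adj v q → G.Adj p q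

lemma dirac_strong (hc : IsChordal G) :
    ∀ N : ℕ, ∀ s : Finset V, s.card ≤ N →
      (∀ p ∈ s, ∀ q ∈ s, p ≠ q → G.Adj p q) ∨
      ∃ u ∈ s, ∃ w ∈ s, ¬ G.Adj u w ∧ u ≠ w ∧ SimpIn G s u ∧ SimpIn G s w := by
  classical
  intro N
  induction N with
  | zero =>
    intro s hs
    left
    intro p hp
    have hse : s = ∅ := Finset.card_eq_zero.mp (by omega)
    rw [hse] at hp
    simp at hp
  | succ N ih =>
    intro s hs
    by_cases hcl : ∀ p ∈ s, ∀ q ∈ s, p ≠ q → G.Adj p q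
    · exact Or.inl hcl
    right
    push_neg at hcl
    obtain ⟨a, ha, b, hb, hab, hnadj⟩ := hcl
    -- minimal separator
    set Seps := (s \ {a, b}).powerset.filter (fun S => ¬ Reach G (s \ S) a b) with hSeps
    have hS0 : (s \ {a, b}) ∈ Seps := by
      rw [hSeps, Finset.mem_filter, Finset.mem_powerset]
      refine ⟨le_rfl, fun hr => ?_⟩
      rcases hr.cases_head with h | ⟨z, ⟨hz1, hz2, hz3⟩, _⟩
      · exact hab h
      · have : z = a ∨ z = b := by
          simp only [Finset.mem_sdiff, Finset.sdiff_sdiff_self_left, Finset.mem_inter,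
            Finset.mem_insert, Finset.mem_singleton] at hz2
          tauto
        rcases this with rfl | rfl
        · exact hz3.ne rfl
        · exact hnadj hz3
    obtain ⟨S, hSmem, hSmin⟩ := Finset.exists_min_image Seps Finset.card ⟨_, hS0⟩
    rw [hSeps, Finset.mem_filter, Finset.mem_powerset] at hSmem
    obtain ⟨hSsub, hsep⟩ := hSmem
    set t := s \ S with ht
    have haS : a ∉ S := fun h => by
      have h2 := hSsub h
      rw [Finset.mem_sdiff] at h2
      exact h2.2 (by simp)
    have hbS : b ∉ S := fun h => by
      have h2 := hSsub h
      rw [Finset.mem_sdiff] at h2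
      exact h2.2 (by simp)
    have hat : a ∈ t := Finset.mem_sdiff.mpr ⟨ha, haS⟩
    have hbt : b ∈ t := Finset.mem_sdiff.mpr ⟨hb, hbS⟩
    have hSs : S ⊆ s := hSsub.trans (Finset.sdiff_subset)
    -- claim 1 : every separator vertex has neighbors in both components
    have claim1 : ∀ x ∈ S, (∃ z, (z ∈ t ∧ Reach G t a z) ∧ G.Adj x z) ∧
        (∃ z, (z ∈ t ∧ Reach G t b z) ∧ G.Adj x z) := by
      intro x hxS
      have hxt : x ∉ t := fun h => (Finset.mem_sdiff.mp h).2 hxS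
      have hxs : x ∈ s := hSs hxS
      have herase : ¬ (S.erase x ∈ Seps) := by
        intro hmem
        have := hSmin _ hmem
        rw [Finset.card_erase_of_mem hxS] at this
        have hcpos : 0 < S.card := Finset.card_pos.mpr ⟨x, hxS⟩
        omega
      have hreach : Reach G (s \ S.erase x) a b := by
        by_contra hno
        exact herase (by
          rw [hSeps, Finset.mem_filter, Finset.mem_powerset]
          exact ⟨(Finset.erase_subset _ _).trans hSsub, hno⟩)
      have heq : s \ S.erase x = insert x t := by
        ext z
        simp only [Finset.mem_sdiff, Finset.mem_erase, Finset.mem_insert, ht]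
        constructor
        · rintro ⟨hzs, hz⟩
          by_cases hzx : z = x
          · exact Or.inl hzx
          · exact Or.inr ⟨hzs, fun hzS => hz ⟨hzx, hzS⟩⟩
        · rintro (rfl | ⟨hzs, hzS⟩)
          · exact ⟨hxs, fun h => h.1 rfl⟩
          · exact ⟨hzs, fun h => hzS h.2⟩
      rw [heq] at hreach
      constructor
      · rcases first_entry hxt (fun h => hxt (h ▸ hat)) hreach with h | ⟨z, hz1, hz2, hz3⟩
        · exact absurd h hsep
        · exact ⟨z, ⟨hz1, hz3⟩, hz2.symm⟩
      · rcases first_entry hxt (fun h => hxt (h ▸ hbt)) (reach_symm hreach)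
          with h | ⟨z, hz1, hz2, hz3⟩
        · exact absurd (reach_symm h) hsep
        · exact ⟨z, ⟨hz1, hz3⟩, hz2.symm⟩
    -- claim 2 : the separator is a clique
    have claim2 : ∀ x ∈ S, ∀ y ∈ S, x ≠ y → G.Adj x y := by
      intro x hxS y hyS hne
      by_contra hnxy
      have hxt : x ∉ t := fun h => (Finset.mem_sdiff.mp h).2 hxS
      have hyt : y ∉ t := fun h => (Finset.mem_sdiff.mp h).2 hyS
      obtain ⟨⟨a1, ⟨ha1t, ha1r⟩, hxa1⟩, ⟨b1, ⟨hb1t, hb1r⟩, hxb1⟩⟩ := claim1 x hxS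
      obtain ⟨⟨a2, ⟨ha2t, ha2r⟩, hya2⟩, ⟨b2, ⟨hb2t, hb2r⟩, hyb2⟩⟩ := claim1 y hyS
      -- component Finsets
      set CA := t.filter (fun z => Reach G t a z) with hCA
      set CB := t.filter (fun z => Reach G t b z) with hCB
      have hreach_comp : ∀ (c : V) {z : V}, Reach G t c z →
          Reach G (t.filter (fun w => Reach G t c w)) c z := by
        intro c z h
        induction h with
        | refl => exact Relation.ReflTransGen.refl
        | @tail e z h1 h2 ih =>
          exact ih.tail ⟨Finset.mem_filter.mpr ⟨h2.1, h1⟩,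
            Finset.mem_filter.mpr ⟨h2.2.1, h1.tail h2⟩, h2.2.2⟩
      have hPex : ∃ L, Valid G (fun z => z ∈ CA) x y L := by
        have h12 : Reach G CA a1 a2 :=
          (reach_symm (hreach_comp a ha1r)).trans (hreach_comp a ha2r)
        obtain ⟨L, hL, hall⟩ := reach_to_list h12
          (Finset.mem_filter.mpr ⟨ha1t, ha1r⟩)
        exact ⟨_, valid_sandwich hL hall (fun z hz => hz) hxa1 hya2.symm⟩
      have hQex : ∃ L, Valid G (fun z => z ∈ CB) x y L := by
        have h12 : Reach G CB b1 b2 :=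
          (reach_symm (hreach_comp b hb1r)).trans (hreach_comp b hb2r)
        obtain ⟨L, hL, hall⟩ := reach_to_list h12
          (Finset.mem_filter.mpr ⟨hb1t, hb1r⟩)
        exact ⟨_, valid_sandwich hL hall (fun z hz => hz) hxb1 hyb2.symm⟩
      have hdisj : ∀ z : V, z ∈ CA → z ∈ CB → False := by
        intro z hzA hzB
        rw [hCA, Finset.mem_filter] at hzA
        rw [hCB, Finset.mem_filter] at hzB
        exact hsep (hzA.2.trans (reach_symm hzB.2))
      have hAB : ∀ p q : V, p ∈ CA → q ∈ CB → ¬ G.Adj p q := by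
        intro p q hpA hqB hpq
        rw [hCA, Finset.mem_filter] at hpA
        rw [hCB, Finset.mem_filter] at hqB
        exact hsep ((hpA.2.tail ⟨hpA.1, hqB.1, hpq⟩).trans (reach_symm hqB.2))
      exact chord_sep hc hnxy hne hAB hdisj
        (fun h => hxt (Finset.mem_filter.mp h).1) (fun h => hyt (Finset.mem_filter.mp h).1)
        (fun h => hxt (Finset.mem_filter.mp h).1) (fun h => hyt (Finset.mem_filter.mp h).1)
        hPex hQex
    -- main construction : a simplicial vertex inside a component
    have key : ∀ c : V, c ∈ t → (∃ w ∈ s, w ∉ t.filter (fun z => Reach G t c z) ∧ w ∉ S) →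
        ∃ u ∈ t.filter (fun z => Reach G t c z), SimpIn G s u := by
      rintro c hct ⟨w, hws, hwC, hwS⟩
      set C := t.filter (fun z => Reach G t c z) with hC
      have hclosure : ∀ u p, u ∈ C → p ∈ t → G.Adj u p → p ∈ C := by
        intro u p huC hpt hup
        rw [hC, Finset.mem_filter] at huC ⊢
        exact ⟨hpt, huC.2.tail ⟨huC.1, hpt, hup⟩⟩
      have hcC : c ∈ C := Finset.mem_filter.mpr ⟨hct, Relation.ReflTransGen.refl⟩
      have hsub : C ∪ S ⊆ s := by
        intro z hz
        rcases Finset.mem_union.mp hz with h | h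
        · exact (Finset.mem_sdiff.mp (Finset.filter_subset _ _ h)).1
        · exact hSs h
      have hlt : (C ∪ S).card < s.card :=
        Finset.card_lt_card ⟨hsub, fun hss =>
          ((Finset.mem_union.mp (hss hws)).elim hwC hwS)⟩
      have lift : ∀ u, u ∈ C → SimpIn G (C ∪ S) u → SimpIn G s u := by
        intro u huC hsi p hp q hq hpq h1 h2
        have hmem : ∀ r, r ∈ s → G.Adj u r → r ∈ C ∪ S := by
          intro r hr hur
          by_cases hrS : r ∈ S
          · exact Finset.mem_union_right _ hrS
          · exact Finset.mem_union_left _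
              (hclosure u r huC (Finset.mem_sdiff.mpr ⟨hr, hrS⟩) hur)
        exact hsi p (hmem p hp h1) q (hmem q hq h2) hpq h1 h2
      rcases ih (C ∪ S) (by omega) with hcl2 | ⟨u1, hu1, u2, hu2, hna, hne2, hsi1, hsi2⟩
      · exact ⟨c, hcC, lift c hcC (fun p hp q hq hpq _ _ => hcl2 p hp q hq hpq)⟩
      · have hone : u1 ∈ C ∨ u2 ∈ C := by
          by_contra h'
          push_neg at h'
          have h1S : u1 ∈ S := (Finset.mem_union.mp hu1).resolve_left h'.1
          have h2S : u2 ∈ S := (Finset.mem_union.mp hu2).resolve_left h'.2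
          exact hna (claim2 _ h1S _ h2S hne2)
        rcases hone with h | h
        · exact ⟨u1, h, lift u1 h hsi1⟩
        · exact ⟨u2, h, lift u2 h hsi2⟩
    -- apply to both components
    have hbnA : b ∉ t.filter (fun z => Reach G t a z) := fun h =>
      hsep (Finset.mem_filter.mp h).2
    have hanB : a ∉ t.filter (fun z => Reach G t b z) := fun h =>
      hsep (reach_symm (Finset.mem_filter.mp h).2)
    obtain ⟨u, huA, hsimpu⟩ := key a hat ⟨b, hb, hbnA, hbS⟩
    obtain ⟨w, hwB, hsimpw⟩ := key b hbt ⟨a, ha, hanB, haS⟩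
    rw [Finset.mem_filter] at huA hwB
    have hnr : ¬ Reach G t a w := fun h => hsep (h.trans (reach_symm hwB.2))
    refine ⟨u, (Finset.mem_sdiff.mp huA.1).1, w, (Finset.mem_sdiff.mp hwB.1).1, ?_, ?_,
      hsimpu, hsimpw⟩
    · intro hadj
      exact hnr (huA.2.tail ⟨huA.1, hwB.1, hadj⟩)
    · rintro rfl
      exact hnr huA.2

def PeoList (G : SimpleGraph V) : List V → Prop
  | [] => True
  | v :: L => (∀ p ∈ L, ∀ q ∈ L, p ≠ q → G.Adj v p → G.Adj v q → G.Adj p q) ∧ PeoList G L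

lemma exists_simp (hc : IsChordal G) (s : Finset V) (hs : s.Nonempty) :
    ∃ v ∈ s, SimpIn G s v := by
  rcases dirac_strong hc s.card s le_rfl with h | ⟨u, hu, w, hw, hna, hne, hs1, hs2⟩
  · obtain ⟨v, hv⟩ := hs
    exact ⟨v, hv, fun p hp q hq hpq _ _ => h p hp q hq hpq⟩
  · exact ⟨u, hu, hs1⟩

lemma peo_list [DecidableEq V] (hc : IsChordal G) :
    ∀ n : ℕ, ∀ s : Finset V, s.card = n →
      ∃ L : List V, L.Nodup ∧ L.toFinset = s ∧ PeoList G L := by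
  intro n
  induction n with
  | zero =>
    intro s hs
    refine ⟨[], by simp, ?_, trivial⟩
    rw [Finset.card_eq_zero.mp hs]; simp
  | succ n ih =>
    intro s hs
    have hne : s.Nonempty := Finset.card_pos.mp (by omega)
    obtain ⟨v, hv, hsimp⟩ := exists_simp hc s hne
    obtain ⟨L, hnd, htf, hpeo⟩ := ih (s.erase v) (by rw [Finset.card_erase_of_mem hv]; omega)
    refine ⟨v :: L, ?_, ?_, ?_, hpeo⟩
    · rw [List.nodup_cons]
      refine ⟨fun h => ?_, hnd⟩
      rw [← List.mem_toFinset, htf] at h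
      exact (Finset.mem_erase.mp h).1 rfl
    · rw [List.toFinset_cons, htf, Finset.insert_erase hv]
    · intro p hp q hq hpq h1 h2
      rw [← List.mem_toFinset, htf] at hp hq
      exact hsimp p (Finset.mem_of_mem_erase hp) q (Finset.mem_of_mem_erase hq) hpq h1 h2

lemma peoList_spec : ∀ {L : List V}, PeoList G L → L.Nodup →
    ∀ i j k : ℕ, ∀ hi : i < L.length, ∀ hj : j < L.length, ∀ hk : k < L.length,
      i < j → i < k → j ≠ k →
      G.Adj L[i] L[j] → G.Adj L[i] L[k] → G.Adj L[j] L[k] := by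
  intro L
  induction L with
  | nil => intro _ _ i j k hi; simp at hi
  | cons v L ihL =>
    intro h nd i j k hi hj hk hij hik hjk h1 h2
    simp only [List.length_cons] at hi hj hk
    obtain ⟨j', rfl⟩ : ∃ j', j = j' + 1 := ⟨j - 1, by omega⟩
    obtain ⟨k', rfl⟩ : ∃ k', k = k' + 1 := ⟨k - 1, by omega⟩
    simp only [List.getElem_cons_succ] at h1 h2 ⊢
    rcases Nat.eq_zero_or_pos i with rfl | hi0
    · simp only [List.getElem_cons_zero] at h1 h2
      refine h.1 _ (List.getElem_mem (by omega)) _ (List.getElem_mem (by omega)) ?_ h1 h2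
      rw [ne_eq, (List.nodup_cons.mp nd).2.getElem_inj_iff]
      omega
    · obtain ⟨i', rfl⟩ : ∃ i', i = i' + 1 := ⟨i - 1, by omega⟩
      simp only [List.getElem_cons_succ] at h1 h2
      exact ihL h.2 (List.nodup_cons.mp nd).2 i' j' k' (by omega) (by omega) (by omega)
        (by omega) (by omega) (by omega) h1 h2

theorem chordal_iff_perfect_elimination' {V : Type*} [Fintype V] (G : SimpleGraph V) :
    IsChordal G ↔
      ∃ e : Fin (Fintype.card V) ≃ V,
        ∀ i j k : Fin (Fintype.card V), i < j → i < k → j ≠ k →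
          G.Adj (e i) (e j) → G.Adj (e i) (e k) → G.Adj (e j) (e k) := by
  classical
  constructor
  · intro hc
    obtain ⟨L, nd, htf, hpeo⟩ := peo_list hc (Fintype.card V) Finset.univ
      (by rw [Finset.card_univ])
    have hmem : ∀ z, z ∈ L := fun z => by
      rw [← List.mem_toFinset, htf]; exact Finset.mem_univ z
    have hlen : L.length = Fintype.card V := by
      rw [← Finset.card_univ, ← htf, List.toFinset_card_of_nodup nd]
    refine ⟨(finCongr hlen.symm).trans (nd.getEquivOfForallMemList L hmem), ?_⟩
    intro i j k hij hik hjk h1 h2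
    have happ : ∀ m : Fin (Fintype.card V),
        ((finCongr hlen.symm).trans (nd.getEquivOfForallMemList L hmem)) m
        = L[(m : ℕ)]'(by omega) := fun m => rfl
    rw [happ, happ] at h1 h2 ⊢
    exact peoList_spec hpeo nd i j k (by omega) (by omega) (by omega) hij hik
      (fun h => hjk (Fin.val_injective h)) h1 h2
  · rintro ⟨e, he⟩ n hn f hfinj hadj
    haveI : NeZero n := ⟨by omega⟩
    obtain ⟨i₀, -, hmin⟩ := Finset.exists_min_image Finset.univ
      (fun i : ZMod n => e.symm (f i)) ⟨0, Finset.mem_univ 0⟩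
    have hne0 : ∀ c : ℕ, 0 < c → c < n → ((c : ℕ) : ZMod n) ≠ 0 := by
      intro c h1 h2 h
      have := ZMod.val_cast_of_lt h2
      rw [h, ZMod.val_zero] at this
      omega
    have hsub : ∀ w z : ZMod n, w = z → w - z = 0 := fun w z h => sub_eq_zero_of_eq h
    have hd : ∀ w : ZMod n, ∀ c : ℕ, 0 < c → c < n → w ≠ w - (c : ZMod n) := by
      intro w c h1 h2 h
      have h3 := hsub _ _ h
      rw [show w - (w - (c : ZMod n)) = (c : ZMod n) from by ring] at h3
      exact hne0 c h1 h2 h3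
    have key : ∀ p q : ZMod n, p ≠ q → e.symm (f p) ≠ e.symm (f q) :=
      fun p q h hh => h (hfinj (e.symm.injective hh))
    refine ⟨i₀ - 1, i₀ + 1, ?_, ?_, ?_, ?_⟩
    · intro h
      exact hd (i₀ + 1) 2 (by omega) (by omega)
        (by rw [show i₀ + 1 - ((2 : ℕ) : ZMod n) = i₀ - 1 from by push_cast; ring]; exact h)
    · intro h
      rw [sub_add_cancel] at h
      exact hd (i₀ + 1) 1 (by omega) (by omega)
        (by rw [show i₀ + 1 - ((1 : ℕ) : ZMod n) = i₀ from by push_cast; ring]; exact h)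
    · intro h
      exact hd (i₀ + 1) 3 (by omega) (by omega)
        (by rw [show i₀ + 1 - ((3 : ℕ) : ZMod n) = i₀ - 1 - 1 from by push_cast; ring]; exact h)
    · have h1 : G.Adj (f i₀) (f (i₀ - 1)) := by
        have := hadj (i₀ - 1)
        rw [sub_add_cancel] at this
        exact this.symm
      have h2 : G.Adj (f i₀) (f (i₀ + 1)) := hadj i₀
      have hlt1 : e.symm (f i₀) < e.symm (f (i₀ - 1)) :=
        lt_of_le_of_ne (hmin _ (Finset.mem_univ _))
          (key i₀ (i₀ - 1) (by
            intro h
            exact hd i₀ 1 (by omega) (by omega) (by push_cast; exact h)))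
      have hlt2 : e.symm (f i₀) < e.symm (f (i₀ + 1)) :=
        lt_of_le_of_ne (hmin _ (Finset.mem_univ _))
          (key i₀ (i₀ + 1) (by
            intro h
            have := hsub _ _ h
            rw [show i₀ - (i₀ + 1) = -1 from by ring] at this
            have h1' : (1 : ZMod n) = 0 := by
              have := neg_eq_zero.mp this
              exact this
            exact hne0 1 (by omega) (by omega) (by push_cast; exact h1')))
      have hne12 : e.symm (f (i₀ - 1)) ≠ e.symm (f (i₀ + 1)) :=
        key _ _ (by
          intro h
          exact hd (i₀ + 1) 2 (by omega) (by omega)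
            (by rw [show i₀ + 1 - ((2 : ℕ) : ZMod n) = i₀ - 1 from by push_cast; ring]
                exact h.symm))
      have := he (e.symm (f i₀)) (e.symm (f (i₀ - 1))) (e.symm (f (i₀ + 1)))
        hlt1 hlt2 hne12 (by simpa using h1) (by simpa using h2)
      simpa using this

end ChordalPEO

/-- A finite graph is chordal iff it admits a perfect elimination ordering:
an ordering `e 0, e 1, ...` of the vertices such that for each `i`, the neighbors of
`e i` occurring later in the ordering form a clique. -/
theorem chordal_iff_perfect_elimination {V : Type*} [Fintype V] (G : SimpleGraph V) :
    IsChordal G ↔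
      ∃ e : Fin (Fintype.card V) ≃ V,
        ∀ i j k : Fin (Fintype.card V), i < j → i < k → j ≠ k →
          G.Adj (e i) (e j) → G.Adj (e i) (e k) → G.Adj (e j) (e k) := by
  exact ChordalPEO.chordal_iff_perfect_elimination' G
end

section
/- Let D = (V, A) be an acyclic digraph with chordal underlying graph, minimum dicut weight τ under weight w : A → Z_{≥0}, v a simplicial vertex with in-neighbors v_1, ..., v_s and out-neighbors v_{s+1}, ..., v_k (tournament ordered), and u_i = w of the arc between v and v_i with Σ_{i≤s} u_i ≤ Σ_{i>s} u_i. Let w' be obtained from w on D' = D − v by adding, for arcs v_i v_j with i ≤ s < j, the multiplicity x_{ij} of a perfect u'-matching between {v_1,...,v_s} and {v_{s+1},...,v_k}, and adding u_j − u'_j to w(v_{s+1} v_j) for j > s+1, where u' is as in the weight-splitting construction. Then every dicut of D' has w'-weight at least τ. -/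
/-- The arcs leaving `U`. -/
def dPlus {V : Type*} [DecidableEq V] (A : Finset (V × V)) (U : Finset V) :
    Finset (V × V) :=
  A.filter (fun e => e.1 ∈ U ∧ e.2 ∉ U)

/-- The arcs entering `U`. -/
def dMinus {V : Type*} [DecidableEq V] (A : Finset (V × V)) (U : Finset V) :
    Finset (V × V) :=
  A.filter (fun e => e.1 ∉ U ∧ e.2 ∈ U)

/-- The underlying undirected simple graph of a digraph with arc set `A`. -/
def underlying {V : Type*} (A : Finset (V × V)) : SimpleGraph V :=
  SimpleGraph.fromRel (fun x y => (x, y) ∈ A)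

/-- A vertex is simplicial if its neighbors form a clique. -/
def IsSimplicial {V : Type*} (G : SimpleGraph V) (v : V) : Prop :=
  ∀ a ∈ G.neighborSet v, ∀ b ∈ G.neighborSet v, a ≠ b → G.Adj a b


/-- If on a subset `T` of `S` the new weight exceeds the old by at least `c` in total,
and the new weight dominates the old everywhere, then the same holds over `S`. -/
lemma sum_transfer {V : Type*} [DecidableEq V] (S T : Finset (V × V))
    (hTS : T ⊆ S) (w w' : V × V → ℕ) (hge : ∀ e, w e ≤ w' e) (c : ℕ)
    (hT : ∑ e ∈ T, w e + c ≤ ∑ e ∈ T, w' e) :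
    ∑ e ∈ S, w e + c ≤ ∑ e ∈ S, w' e := by
  rw [← Finset.sum_sdiff hTS, ← Finset.sum_sdiff (f := w') hTS]
  have h := Finset.sum_le_sum (s := S \ T) (f := w) (g := w') (fun e _ => hge e)
  omega

/-- After deleting the simplicial vertex `v` and transferring the weight of the arcs
incident to `v` onto the clique on its neighbors (via the perfect `u'`-matching `x` and the
extra weight `u j - u' j` on the arcs leaving `vs s`), every dicut of `D' = D - v` has
`w'`-weight at least `τ`. -/
theorem transferred_weight_dicut {V : Type*} [Fintype V] [DecidableEq V]
    (A : Finset (V × V))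
    (hacyc : ∀ x : V, ¬ Relation.TransGen (fun a b => (a, b) ∈ A) x x)
    (hchordal : IsChordal (underlying A))
    (w : V × V → ℕ) (τ : ℕ)
    (hmin : ∀ U : Finset V, U.Nonempty → U ≠ Finset.univ → dMinus A U = ∅ →
      τ ≤ ∑ e ∈ dPlus A U, w e)
    (v : V) (hsimp : IsSimplicial (underlying A) v)
    (k s : ℕ) (hsk : s ≤ k) (vs : Fin k → V) (hinj : Function.Injective vs)
    (hnbhd : ∀ x : V, (underlying A).Adj v x ↔ ∃ i : Fin k, x = vs i)
    (hin : ∀ i : Fin k, (i : ℕ) < s → (vs i, v) ∈ A ∧ (v, vs i) ∉ A)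
    (hout : ∀ i : Fin k, s ≤ (i : ℕ) → (v, vs i) ∈ A ∧ (vs i, v) ∉ A)
    (htour : ∀ i j : Fin k, i < j → (vs i, vs j) ∈ A)
    (u : Fin k → ℕ)
    (hu : ∀ i : Fin k, u i = if (i : ℕ) < s then w (vs i, v) else w (v, vs i))
    (hbal : ∑ i ∈ Finset.univ.filter (fun i : Fin k => (i : ℕ) < s), u i ≤
            ∑ i ∈ Finset.univ.filter (fun i : Fin k => s ≤ (i : ℕ)), u i)
    (u' : Fin k → ℕ)
    (hu'le : ∀ i, u' i ≤ u i)
    (hu'in : ∀ i : Fin k, (i : ℕ) < s → u' i = u i)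
    (hu'bal : ∑ i ∈ Finset.univ.filter (fun i : Fin k => (i : ℕ) < s), u' i =
              ∑ i ∈ Finset.univ.filter (fun i : Fin k => s ≤ (i : ℕ)), u' i)
    (x : Fin k → Fin k → ℕ)
    (hxrow : ∀ i : Fin k, (i : ℕ) < s →
      ∑ j ∈ Finset.univ.filter (fun j : Fin k => s ≤ (j : ℕ)), x i j = u' i)
    (hxcol : ∀ j : Fin k, s ≤ (j : ℕ) →
      ∑ i ∈ Finset.univ.filter (fun i : Fin k => (i : ℕ) < s), x i j = u' j)
    (w' : V × V → ℕ)
    (hw'x : ∀ i j : Fin k, (i : ℕ) < s → s ≤ (j : ℕ) →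
      w' (vs i, vs j) = w (vs i, vs j) + x i j)
    (hw's : ∀ (h : s < k) (j : Fin k), s < (j : ℕ) →
      w' (vs ⟨s, h⟩, vs j) = w (vs ⟨s, h⟩, vs j) + (u j - u' j))
    (hw'eq : ∀ e : V × V,
      (∀ i j : Fin k, ¬ ((i : ℕ) < s ∧ s ≤ (j : ℕ) ∧ e = (vs i, vs j))) →
      (∀ (h : s < k) (j : Fin k), ¬ (s < (j : ℕ) ∧ e = (vs ⟨s, h⟩, vs j))) →
      w' e = w e) :
    ∀ U : Finset V, v ∉ U → U.Nonempty → U ≠ Finset.univ.erase v →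
      dMinus (A.filter (fun e => e.1 ≠ v ∧ e.2 ≠ v)) U = ∅ →
      τ ≤ ∑ e ∈ dPlus (A.filter (fun e => e.1 ≠ v ∧ e.2 ≠ v)) U, w' e := by
  intro U hvU hUne hUneq hdm
  classical
  set A' := A.filter (fun e => e.1 ≠ v ∧ e.2 ≠ v) with hA'
  -- v is not one of the vs i
  have hvne : ∀ i : Fin k, vs i ≠ v := by
    intro i
    have h : (underlying A).Adj v (vs i) := (hnbhd (vs i)).2 ⟨i, rfl⟩
    exact Ne.symm h.ne
  -- w' dominates w everywhere
  have hwge : ∀ e, w e ≤ w' e := by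
    intro e
    by_cases h1 : ∃ i j : Fin k, (i : ℕ) < s ∧ s ≤ (j : ℕ) ∧ e = (vs i, vs j)
    · obtain ⟨i, j, hi, hj, rfl⟩ := h1
      rw [hw'x i j hi hj]; omega
    · by_cases h2 : ∃ (h : s < k) (j : Fin k), s < (j : ℕ) ∧ e = (vs ⟨s, h⟩, vs j)
      · obtain ⟨h, j, hj, rfl⟩ := h2
        rw [hw's h j hj]; omega
      · rw [hw'eq e (fun i j h => h1 ⟨i, j, h.1, h.2.1, h.2.2⟩)
          (fun h j hh => h2 ⟨h, j, hh.1, hh.2⟩)]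
  -- adjacency criterion
  have hadj : ∀ a : V, a ≠ v → ((a, v) ∈ A ∨ (v, a) ∈ A) → ∃ i : Fin k, a = vs i := by
    intro a hav har
    apply (hnbhd a).1
    rw [underlying, SimpleGraph.fromRel_adj]
    exact ⟨Ne.symm hav, har.symm.imp id id⟩
  by_cases hex : ∃ j : Fin k, s ≤ (j : ℕ) ∧ vs j ∈ U
  · -- Case 2: some out-neighbor of v is in U; use U ∪ {v}
    obtain ⟨j0, hj0s, hj0U⟩ := hex
    have hsk' : s < k := lt_of_le_of_lt hj0s j0.isLt
    have hallin : ∀ i : Fin k, (i : ℕ) < (j0 : ℕ) → vs i ∈ U := by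
      intro i hi
      by_contra hiU
      have harc : (vs i, vs j0) ∈ A := htour i j0 (Fin.lt_def.mpr hi)
      have hmem : (vs i, vs j0) ∈ dMinus A' U := by
        rw [dMinus, Finset.mem_filter, hA', Finset.mem_filter]
        exact ⟨⟨harc, hvne i, hvne j0⟩, hiU, hj0U⟩
      rw [hdm] at hmem
      exact absurd hmem (Finset.notMem_empty _)
    have hvsS : vs ⟨s, hsk'⟩ ∈ U := by
      rcases lt_or_eq_of_le hj0s with h | h
      · exact hallin _ h
      · have : (⟨s, hsk'⟩ : Fin k) = j0 := Fin.ext h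
        rw [this]; exact hj0U
    -- U ∪ {v} is a dicut of D
    have hU'dm : dMinus A (insert v U) = ∅ := by
      rw [dMinus, Finset.filter_eq_empty_iff]
      rintro ⟨a, b⟩ hab ⟨ha, hb⟩
      simp only [Finset.mem_insert, not_or] at ha
      simp only [Finset.mem_insert] at hb
      rcases hb with hbv | hbU
      · subst hbv
        have hav : a ≠ b := by
          rintro rfl; exact hacyc a (Relation.TransGen.single hab)
        obtain ⟨i, rfl⟩ := hadj a hav (Or.inl hab)
        by_cases his : (i : ℕ) < s
        · exact ha.2 (hallin i (lt_of_lt_of_le his hj0s))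
        · exact (hout i (le_of_not_gt his)).2 hab
      · have hbv : b ≠ v := fun h => hvU (h ▸ hbU)
        have hmem : (a, b) ∈ dMinus A' U := by
          rw [dMinus, Finset.mem_filter, hA', Finset.mem_filter]
          exact ⟨⟨hab, ha.1, hbv⟩, ha.2, hbU⟩
        rw [hdm] at hmem
        exact absurd hmem (Finset.notMem_empty _)
    have hU'ne : (insert v U).Nonempty := ⟨v, Finset.mem_insert_self _ _⟩
    have hU'neq : insert v U ≠ Finset.univ := by
      have hsub : U ⊆ Finset.univ.erase v := fun a haU =>
        Finset.mem_erase.mpr ⟨fun h => hvU (h ▸ haU), Finset.mem_univ _⟩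
      obtain ⟨y, hy1, hy2⟩ := Finset.exists_of_ssubset (lt_of_le_of_ne hsub hUneq)
      intro h
      have hy : y ∈ insert v U := h ▸ Finset.mem_univ y
      rcases Finset.mem_insert.mp hy with rfl | hyU
      · exact (Finset.mem_erase.mp hy1).1 rfl
      · exact hy2 hyU
    have hτ := hmin (insert v U) hU'ne hU'neq hU'dm
    -- decompose dPlus A (insert v U)
    set J : Finset (Fin k) :=
      Finset.univ.filter (fun j : Fin k => s ≤ (j : ℕ) ∧ vs j ∉ U) with hJ
    have hJs : ∀ j ∈ J, s < (j : ℕ) := by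
      intro j hj
      rw [hJ, Finset.mem_filter] at hj
      rcases lt_or_eq_of_le hj.2.1 with h | h
      · exact h
      · exfalso
        have : (⟨s, hsk'⟩ : Fin k) = j := Fin.ext h
        exact hj.2.2 (this ▸ hvsS)
    have hdecomp : dPlus A (insert v U) =
        dPlus A' U ∪ J.image (fun j => (v, vs j)) := by
      ext e
      rw [dPlus, Finset.mem_filter, Finset.mem_union, dPlus, Finset.mem_filter,
        hA', Finset.mem_filter, Finset.mem_image]
      constructor
      · rintro ⟨heA, h1, h2⟩
        simp only [Finset.mem_insert, not_or] at h1 h2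
        by_cases hev : e.1 = v
        · right
          obtain ⟨i, hi⟩ := hadj e.2 h2.1 (Or.inr (by rw [← hev]; exact heA))
          refine ⟨i, ?_, ?_⟩
          · rw [hJ, Finset.mem_filter]
            refine ⟨Finset.mem_univ _, ?_, hi ▸ h2.2⟩
            by_contra his
            exact (hin i (lt_of_not_ge his)).2 (by rw [← hi, ← hev]; exact heA)
          · rw [← hi, ← hev]
        · left
          rcases h1 with h1 | h1
          · exact absurd h1 hev
          · exact ⟨⟨heA, hev, h2.1⟩, h1, h2.2⟩
      · rintro (⟨⟨heA, hev1, hev2⟩, h1, h2⟩ | ⟨j, hjJ, he⟩)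
        · exact ⟨heA, Finset.mem_insert_of_mem h1,
            fun h => (Finset.mem_insert.mp h).elim hev2 h2⟩
        · rw [hJ, Finset.mem_filter] at hjJ
          subst he
          exact ⟨(hout j hjJ.2.1).1, Finset.mem_insert_self _ _,
            fun h => (Finset.mem_insert.mp h).elim (fun hh => hvne j hh) hjJ.2.2⟩
    have hdisj : Disjoint (dPlus A' U) (J.image (fun j => (v, vs j))) := by
      rw [Finset.disjoint_left]
      intro e he1 he2
      rw [dPlus, Finset.mem_filter, hA', Finset.mem_filter] at he1
      obtain ⟨j, _, he⟩ := Finset.mem_image.mp he2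
      exact he1.1.2.1 (by rw [← he])
    have hsum1 : ∑ e ∈ dPlus A (insert v U), w e =
        ∑ e ∈ dPlus A' U, w e + ∑ j ∈ J, u j := by
      rw [hdecomp, Finset.sum_union hdisj]
      congr 1
      rw [Finset.sum_image (fun a _ b _ h => hinj (congrArg Prod.snd h))]
      apply Finset.sum_congr rfl
      intro j hj
      rw [hu j, if_neg (by exact not_lt.mpr (le_of_lt (hJs j hj)))]
    -- the transfer set
    set Ifull : Finset (Fin k) :=
      Finset.univ.filter (fun i : Fin k => (i : ℕ) < s) with hIfull
    have hs'notin : (⟨s, hsk'⟩ : Fin k) ∉ Ifull := by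
      rw [hIfull, Finset.mem_filter]; simp
    set P : Finset (Fin k × Fin k) := (insert ⟨s, hsk'⟩ Ifull) ×ˢ J with hP
    have hginj : ∀ p ∈ P, ∀ q ∈ P,
        (vs p.1, vs p.2) = (vs q.1, vs q.2) → p = q := by
      intro p _ q _ h
      exact Prod.ext (hinj (congrArg Prod.fst h)) (hinj (congrArg Prod.snd h))
    set T : Finset (V × V) := P.image (fun p => (vs p.1, vs p.2)) with hT
    have hivals : ∀ i ∈ insert (⟨s, hsk'⟩ : Fin k) Ifull, (i : ℕ) ≤ s ∧ vs i ∈ U := by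
      intro i hi
      rcases Finset.mem_insert.mp hi with rfl | hi
      · exact ⟨le_refl s, hvsS⟩
      · rw [hIfull, Finset.mem_filter] at hi
        exact ⟨le_of_lt hi.2, hallin i (lt_of_lt_of_le hi.2 hj0s)⟩
    have hTS : T ⊆ dPlus A' U := by
      intro e he
      rw [hT, Finset.mem_image] at he
      obtain ⟨⟨i, j⟩, hpP, he⟩ := he
      rw [hP, Finset.mem_product] at hpP
      obtain ⟨hiv, hiU⟩ := hivals i hpP.1
      have hjJ := hpP.2
      have hjs := hJs j hjJ
      rw [hJ, Finset.mem_filter] at hjJ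
      rw [dPlus, Finset.mem_filter, hA', Finset.mem_filter, ← he]
      exact ⟨⟨htour i j (Fin.lt_def.mpr (lt_of_le_of_lt hiv hjs)), hvne i, hvne j⟩,
        hiU, hjJ.2.2⟩
    have hTsum : ∑ e ∈ T, w e + ∑ j ∈ J, u j ≤ ∑ e ∈ T, w' e := by
      rw [hT, Finset.sum_image hginj, Finset.sum_image hginj, hP,
        Finset.sum_product, Finset.sum_product,
        Finset.sum_insert hs'notin, Finset.sum_insert hs'notin]
      dsimp only
      have e1 : ∑ j ∈ J, w' (vs ⟨s, hsk'⟩, vs j) =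
          ∑ j ∈ J, w (vs ⟨s, hsk'⟩, vs j) + ∑ j ∈ J, (u j - u' j) := by
        rw [← Finset.sum_add_distrib]
        exact Finset.sum_congr rfl (fun j hj => hw's hsk' j (hJs j hj))
      have e2 : ∑ i ∈ Ifull, ∑ j ∈ J, w' (vs i, vs j) =
          ∑ i ∈ Ifull, ∑ j ∈ J, w (vs i, vs j) + ∑ j ∈ J, u' j := by
        have step : ∀ i ∈ Ifull, ∑ j ∈ J, w' (vs i, vs j) =
            ∑ j ∈ J, w (vs i, vs j) + ∑ j ∈ J, x i j := by
          intro i hi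
          rw [hIfull, Finset.mem_filter] at hi
          rw [← Finset.sum_add_distrib]
          apply Finset.sum_congr rfl
          intro j hj
          rw [hJ, Finset.mem_filter] at hj
          exact hw'x i j hi.2 hj.2.1
        rw [Finset.sum_congr rfl step, Finset.sum_add_distrib]
        congr 1
        rw [Finset.sum_comm]
        apply Finset.sum_congr rfl
        intro j hj
        rw [hJ, Finset.mem_filter] at hj
        rw [← hxcol j hj.2.1, hIfull]
      rw [e1, e2]
      have e3 : ∑ j ∈ J, (u j - u' j) + ∑ j ∈ J, u' j = ∑ j ∈ J, u j := by
        rw [← Finset.sum_add_distrib]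
        exact Finset.sum_congr rfl (fun j _ => Nat.sub_add_cancel (hu'le j))
      omega
    have := sum_transfer (dPlus A' U) T hTS w w' hwge (∑ j ∈ J, u j) hTsum
    omega
  · -- Case 1: no out-neighbor of v is in U; U itself is a dicut of D
    push_neg at hex
    have hUdm : dMinus A U = ∅ := by
      rw [dMinus, Finset.filter_eq_empty_iff]
      rintro ⟨a, b⟩ hab ⟨ha, hb⟩
      have hbv : b ≠ v := fun h => hvU (h ▸ hb)
      by_cases hav : a = v
      · subst hav
        obtain ⟨i, rfl⟩ := hadj b hbv (Or.inr hab)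
        by_cases his : (i : ℕ) < s
        · exact (hin i his).2 hab
        · exact hex i (le_of_not_gt his) hb
      · have hmem : (a, b) ∈ dMinus A' U := by
          rw [dMinus, Finset.mem_filter, hA', Finset.mem_filter]
          exact ⟨⟨hab, hav, hbv⟩, ha, hb⟩
        rw [hdm] at hmem
        exact absurd hmem (Finset.notMem_empty _)
    have hUneq' : U ≠ Finset.univ := by
      intro h; exact hvU (h ▸ Finset.mem_univ v)
    have hτ := hmin U hUne hUneq' hUdm
    set I : Finset (Fin k) :=
      Finset.univ.filter (fun i : Fin k => (i : ℕ) < s ∧ vs i ∈ U) with hI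
    have hdecomp : dPlus A U = dPlus A' U ∪ I.image (fun i => (vs i, v)) := by
      ext e
      rw [dPlus, Finset.mem_filter, Finset.mem_union, dPlus, Finset.mem_filter,
        hA', Finset.mem_filter, Finset.mem_image]
      constructor
      · rintro ⟨heA, h1, h2⟩
        have hev1 : e.1 ≠ v := fun h => hvU (h ▸ h1)
        by_cases hev2 : e.2 = v
        · right
          obtain ⟨i, hi⟩ := hadj e.1 hev1 (Or.inl (by rw [← hev2]; exact heA))
          refine ⟨i, ?_, ?_⟩
          · rw [hI, Finset.mem_filter]
            refine ⟨Finset.mem_univ _, ?_, hi ▸ h1⟩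
            by_contra his
            exact (hout i (le_of_not_gt his)).2 (by rw [← hi, ← hev2]; exact heA)
          · rw [← hi, ← hev2]
        · left
          exact ⟨⟨heA, hev1, hev2⟩, h1, h2⟩
      · rintro (⟨⟨heA, _, _⟩, h1, h2⟩ | ⟨i, hiI, he⟩)
        · exact ⟨heA, h1, h2⟩
        · rw [hI, Finset.mem_filter] at hiI
          subst he
          exact ⟨(hin i hiI.2.1).1, hiI.2.2, hvU⟩
    have hdisj : Disjoint (dPlus A' U) (I.image (fun i => (vs i, v))) := by
      rw [Finset.disjoint_left]
      intro e he1 he2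
      rw [dPlus, Finset.mem_filter, hA', Finset.mem_filter] at he1
      obtain ⟨i, _, he⟩ := Finset.mem_image.mp he2
      exact he1.1.2.2 (by rw [← he])
    have hsum1 : ∑ e ∈ dPlus A U, w e =
        ∑ e ∈ dPlus A' U, w e + ∑ i ∈ I, u i := by
      rw [hdecomp, Finset.sum_union hdisj]
      congr 1
      rw [Finset.sum_image (fun a _ b _ h => hinj (congrArg Prod.fst h))]
      apply Finset.sum_congr rfl
      intro i hi
      rw [hI, Finset.mem_filter] at hi
      rw [hu i, if_pos hi.2.1]
    set Jall : Finset (Fin k) :=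
      Finset.univ.filter (fun j : Fin k => s ≤ (j : ℕ)) with hJall
    set P : Finset (Fin k × Fin k) := I ×ˢ Jall with hP
    have hginj : ∀ p ∈ P, ∀ q ∈ P,
        (vs p.1, vs p.2) = (vs q.1, vs q.2) → p = q := by
      intro p _ q _ h
      exact Prod.ext (hinj (congrArg Prod.fst h)) (hinj (congrArg Prod.snd h))
    set T : Finset (V × V) := P.image (fun p => (vs p.1, vs p.2)) with hT
    have hTS : T ⊆ dPlus A' U := by
      intro e he
      rw [hT, Finset.mem_image] at he
      obtain ⟨⟨i, j⟩, hpP, he⟩ := he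
      rw [hP, Finset.mem_product] at hpP
      rw [hI, Finset.mem_filter] at hpP
      have hjJ := hpP.2
      rw [hJall, Finset.mem_filter] at hjJ
      obtain ⟨_, his, hiU⟩ := hpP.1
      rw [dPlus, Finset.mem_filter, hA', Finset.mem_filter, ← he]
      exact ⟨⟨htour i j (Fin.lt_def.mpr (lt_of_lt_of_le his hjJ.2)), hvne i, hvne j⟩,
        hiU, hex j hjJ.2⟩
    have hTsum : ∑ e ∈ T, w e + ∑ i ∈ I, u i ≤ ∑ e ∈ T, w' e := by
      rw [hT, Finset.sum_image hginj, Finset.sum_image hginj, hP,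
        Finset.sum_product, Finset.sum_product]
      dsimp only
      have step : ∀ i ∈ I, ∑ j ∈ Jall, w' (vs i, vs j) =
          ∑ j ∈ Jall, w (vs i, vs j) + u i := by
        intro i hi
        rw [hI, Finset.mem_filter] at hi
        have inner : ∀ j ∈ Jall, w' (vs i, vs j) = w (vs i, vs j) + x i j := by
          intro j hj
          rw [hJall, Finset.mem_filter] at hj
          exact hw'x i j hi.2.1 hj.2
        rw [Finset.sum_congr rfl inner, Finset.sum_add_distrib]
        congr 1
        rw [hJall, hxrow i hi.2.1, hu'in i hi.2.1]
      rw [Finset.sum_congr rfl step, Finset.sum_add_distrib]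
    have := sum_transfer (dPlus A' U) T hTS w w' hwge (∑ i ∈ I, u i) hTsum
    omega
end

section
/- Let J be a dijoin of a digraph D' = D − v where v has only out-arcs v v_1, ..., v v_k in D and the dicuts of D' are exactly the restrictions of dicuts of D (as in the simplicial-vertex deletion). If δ(v) = {v v_1, ..., v v_k} is a dicut of D, then J ∪ {v v_j} is a dijoin of D for any j ∈ {1, ..., k}; and if δ(v) is not a dicut of D, then J itself is a dijoin of D. -/
/-- `C` is a dicut of the digraph with arc set `A`. -/
def IsDicut {V : Type*} [Fintype V] [DecidableEq V] (A C : Finset (V × V)) : Prop :=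
  ∃ U : Finset V, U.Nonempty ∧ U ≠ Finset.univ ∧ dMinus A U = ∅ ∧ C = dPlus A U

/-- `J` is a dijoin: a set of arcs meeting every dicut. -/
def IsDijoin {V : Type*} [Fintype V] [DecidableEq V] (A J : Finset (V × V)) : Prop :=
  J ⊆ A ∧ ∀ C : Finset (V × V), IsDicut A C → (C ∩ J).Nonempty

/-- Mapping dijoins back after deleting a vertex `v` with only out-arcs `v → vs j`.
If the dicuts of `D' = D − v` are exactly the restrictions of the dicuts of `D` other than
possibly `δ⁺({v})`, then: if `δ⁺({v})` is a dicut of `D`, adding any arc `v → vs j` to a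
dijoin `J` of `D'` yields a dijoin of `D`; and if `δ⁺({v})` is not a dicut of `D`, then `J`
itself is a dijoin of `D`. -/
theorem mapping_dijoin_back {V : Type*} [Fintype V] [DecidableEq V]
    (A : Finset (V × V)) (v : V) (k : ℕ) (vs : Fin k → V)
    (hinj : Function.Injective vs) (hne : ∀ i, vs i ≠ v)
    (hout : ∀ i : Fin k, (v, vs i) ∈ A)
    (honlyout : ∀ e ∈ A, e.1 = v → ∃ i : Fin k, e.2 = vs i)
    (hnoin : ∀ e ∈ A, e.2 ≠ v)
    (J : Finset (V × V))
    (hJ : IsDijoin (A.filter (fun e => e.1 ≠ v ∧ e.2 ≠ v)) J)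
    (hrestr : ∀ U : Finset V, U.Nonempty → U ≠ Finset.univ → dMinus A U = ∅ →
      dPlus A U ≠ dPlus A {v} →
      IsDicut (A.filter (fun e => e.1 ≠ v ∧ e.2 ≠ v))
        ((dPlus A U).filter (fun e => e.1 ≠ v ∧ e.2 ≠ v)))
    (hrestr' : ∀ C : Finset (V × V),
      IsDicut (A.filter (fun e => e.1 ≠ v ∧ e.2 ≠ v)) C →
      ∃ U : Finset V, U.Nonempty ∧ U ≠ Finset.univ ∧ dMinus A U = ∅ ∧
        C = (dPlus A U).filter (fun e => e.1 ≠ v ∧ e.2 ≠ v)) :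
    (IsDicut A (dPlus A {v}) → ∀ j : Fin k, IsDijoin A (J ∪ {(v, vs j)})) ∧
    (¬ IsDicut A (dPlus A {v}) → IsDijoin A J) := by
  have hJsub : J ⊆ A := fun e he => (Finset.mem_filter.mp (hJ.1 he)).1
  have key : ∀ C, IsDicut A C → C ≠ dPlus A {v} → (C ∩ J).Nonempty := by
    rintro C ⟨U, hU1, hU2, hU3, rfl⟩ hCne
    obtain ⟨e, he⟩ := hJ.2 _ (hrestr U hU1 hU2 hU3 hCne)
    rw [Finset.mem_inter] at he
    exact ⟨e, Finset.mem_inter.mpr ⟨Finset.mem_of_mem_filter e he.1, he.2⟩⟩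
  constructor
  · intro hdv j
    constructor
    · intro e he
      rcases Finset.mem_union.mp he with h | h
      · exact hJsub h
      · rw [Finset.mem_singleton] at h; subst h; exact hout j
    · intro C hC
      by_cases hCe : C = dPlus A {v}
      · refine ⟨(v, vs j), Finset.mem_inter.mpr ⟨?_, Finset.mem_union_right _ (Finset.mem_singleton_self _)⟩⟩
        rw [hCe]
        simp [dPlus, hout j, hne j]
      · obtain ⟨e, he⟩ := key C hC hCe
        rw [Finset.mem_inter] at he
        exact ⟨e, Finset.mem_inter.mpr ⟨he.1, Finset.mem_union_left _ he.2⟩⟩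
  · intro hnd
    refine ⟨hJsub, fun C hC => key C hC ?_⟩
    rintro rfl; exact hnd hC
end
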